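/- arXiv:0909.5293 — 7 statements merged into one kernel-verified Lean document; each statement's English description precedes it below -/
import Mathlib

section
/- Let G=(V,E) be a finite graph and E_1,…,E_s ⊆ E pairwise disjoint. For ℓ=1,…,s let r_ℓ be the cut-rate of E_ℓ in the graph G∖(E_1∪…∪E_{ℓ−1}). If r_ℓ ≥ y for all ℓ, then CR(E_1∪…∪E_s) ≥ y, with equality if and only if r_ℓ = y for all ℓ; the analogous statement holds with all inequalities reversed. -/
open Finset

/-- Number of connected components of the graph on `V` with edge set `E`. -/
noncomputable def nComp {V : Type} [Fintype V] [DecidableEq V] (E : Finset (Sym2 V)) : ℕ :=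
  Nat.card (SimpleGraph.fromEdgeSet (↑E : Set (Sym2 V))).ConnectedComponent

/-- The cut-rate of `E' ⊆ E` in the graph with edge set `E`. -/
noncomputable def cutRate {V : Type} [Fintype V] [DecidableEq V]
    (E E' : Finset (Sym2 V)) : ℝ :=
  if 1 < Fintype.card V ∧ E'.Nonempty then
    ((nComp (E \ E') : ℝ) - nComp E) / E'.card
  else 0

/-- The maximum cut-rate of the graph with edge set `E`. -/
noncomputable def opt {V : Type} [Fintype V] [DecidableEq V] (E : Finset (Sym2 V)) : ℝ :=
  E.powerset.sup' (Finset.powerset_nonempty E) (fun E' => cutRate E E')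

/-- The graph with edge set `E` is connected. -/
def Conn {V : Type} [Fintype V] [DecidableEq V] (E : Finset (Sym2 V)) : Prop :=
  (SimpleGraph.fromEdgeSet (↑E : Set (Sym2 V))).Connected

/-- `S` is a connected spanning subgraph of the graph with edge set `E`. -/
def IsCSG {V : Type} [Fintype V] [DecidableEq V] (E S : Finset (Sym2 V)) : Prop :=
  S ⊆ E ∧ Conn S

/-- `α` is a probability distribution on the edge set `E`. -/
def IsDist {V : Type} [Fintype V] [DecidableEq V] (E : Finset (Sym2 V))
    (α : Sym2 V → ℝ) : Prop :=
  (∀ e, 0 ≤ α e) ∧ (∀ e ∉ E, α e = 0) ∧ ∑ e ∈ E, α e = 1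

/-- total weight of an edge set under `α`. -/
noncomputable def wt {V : Type} [Fintype V] [DecidableEq V]
    (α : Sym2 V → ℝ) (S : Finset (Sym2 V)) : ℝ :=
  ∑ e ∈ S, α e

/-- `S` is a minimum-weight connected spanning subgraph for `α`. -/
def IsMinCSG {V : Type} [Fintype V] [DecidableEq V] (E : Finset (Sym2 V))
    (α : Sym2 V → ℝ) (S : Finset (Sym2 V)) : Prop :=
  IsCSG E S ∧ ∀ T, IsCSG E T → wt α S ≤ wt α T

/-- Union of the classes `Es j` for `j < ℓ`. -/
noncomputable def prevUnion {V : Type} [Fintype V] [DecidableEq V] {s : ℕ}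
    (Es : Fin s → Finset (Sym2 V)) (ℓ : Fin s) : Finset (Sym2 V) :=
  (Finset.univ.filter (fun j : Fin s => j < ℓ)).biUnion Es

private lemma mediant_ge' {s : ℕ} (hs : 0 < s) (a c : Fin s → ℝ) (hc : ∀ i, 0 < c i) (y : ℝ)
    (h : ∀ i, y ≤ a i / c i) :
    y ≤ (∑ i, a i) / (∑ i, c i) ∧
      ((∑ i, a i) / (∑ i, c i) = y ↔ ∀ i, a i / c i = y) := by
  have hC : 0 < ∑ i, c i :=
    Finset.sum_pos (fun i _ => hc i) (Finset.univ_nonempty_iff.mpr ⟨⟨0, hs⟩⟩)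
  have key : ∀ i, y * c i ≤ a i := fun i => (le_div_iff₀ (hc i)).mp (h i)
  have hsum : y * ∑ i, c i ≤ ∑ i, a i := by
    rw [Finset.mul_sum]; exact Finset.sum_le_sum fun i _ => key i
  refine ⟨(le_div_iff₀ hC).mpr hsum, ?_⟩
  rw [div_eq_iff hC.ne']
  constructor
  · intro heq i
    have h0 : ∑ j, (a j - y * c j) = 0 := by
      rw [Finset.sum_sub_distrib, ← Finset.mul_sum]; linarith
    have := (Finset.sum_eq_zero_iff_of_nonneg
      (fun j _ => sub_nonneg.mpr (key j))).mp h0 i (Finset.mem_univ i)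
    rw [div_eq_iff (hc i).ne']; linarith
  · intro hall
    have h1 : ∀ i, a i = y * c i := fun i => by
      have := hall i; rwa [div_eq_iff (hc i).ne'] at this
    rw [Finset.mul_sum]; exact Finset.sum_congr rfl fun i _ => h1 i

private lemma mediant_le' {s : ℕ} (hs : 0 < s) (a c : Fin s → ℝ) (hc : ∀ i, 0 < c i) (y : ℝ)
    (h : ∀ i, a i / c i ≤ y) :
    (∑ i, a i) / (∑ i, c i) ≤ y ∧
      ((∑ i, a i) / (∑ i, c i) = y ↔ ∀ i, a i / c i = y) := by
  have hC : 0 < ∑ i, c i :=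
    Finset.sum_pos (fun i _ => hc i) (Finset.univ_nonempty_iff.mpr ⟨⟨0, hs⟩⟩)
  have key : ∀ i, a i ≤ y * c i := fun i => (div_le_iff₀ (hc i)).mp (h i)
  have hsum : ∑ i, a i ≤ y * ∑ i, c i := by
    rw [Finset.mul_sum]; exact Finset.sum_le_sum fun i _ => key i
  refine ⟨(div_le_iff₀ hC).mpr hsum, ?_⟩
  rw [div_eq_iff hC.ne']
  constructor
  · intro heq i
    have h0 : ∑ j, (y * c j - a j) = 0 := by
      rw [Finset.sum_sub_distrib, ← Finset.mul_sum]; linarith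
    have := (Finset.sum_eq_zero_iff_of_nonneg
      (fun j _ => sub_nonneg.mpr (key j))).mp h0 i (Finset.mem_univ i)
    rw [div_eq_iff (hc i).ne']; linarith
  · intro hall
    have h1 : ∀ i, a i = y * c i := fun i => by
      have := hall i; rwa [div_eq_iff (hc i).ne'] at this
    rw [Finset.mul_sum]; exact Finset.sum_congr rfl fun i _ => h1 i

theorem stmt_1 {V : Type} [Fintype V] [DecidableEq V] (E : Finset (Sym2 V))
    (hV : 1 < Fintype.card V) (s : ℕ) (hs : 0 < s)
    (Es : Fin s → Finset (Sym2 V))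
    (hsub : ∀ i, Es i ⊆ E)
    (hdisj : ∀ i j, i ≠ j → Disjoint (Es i) (Es j))
    (hne : ∀ i, (Es i).Nonempty) (y : ℝ) :
    ((∀ ℓ, y ≤ cutRate (E \ prevUnion Es ℓ) (Es ℓ)) →
      y ≤ cutRate E (Finset.univ.biUnion Es) ∧
      (cutRate E (Finset.univ.biUnion Es) = y ↔
        ∀ ℓ, cutRate (E \ prevUnion Es ℓ) (Es ℓ) = y)) ∧
    ((∀ ℓ, cutRate (E \ prevUnion Es ℓ) (Es ℓ) ≤ y) →
      cutRate E (Finset.univ.biUnion Es) ≤ y ∧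
      (cutRate E (Finset.univ.biUnion Es) = y ↔
        ∀ ℓ, cutRate (E \ prevUnion Es ℓ) (Es ℓ) = y))  := by
  set U : ℕ → Finset (Sym2 V) :=
    fun k => (Finset.univ.filter fun j : Fin s => (j : ℕ) < k).biUnion Es with hU
  have hprev : ∀ ℓ : Fin s, prevUnion Es ℓ = U (ℓ : ℕ) := by
    intro ℓ; rfl
  have hstep : ∀ ℓ : Fin s, (E \ U (ℓ : ℕ)) \ Es ℓ = E \ U ((ℓ : ℕ) + 1) := by
    intro ℓ; ext e
    simp only [hU, Finset.mem_sdiff, Finset.mem_biUnion, Finset.mem_filter,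
      Finset.mem_univ, true_and, not_exists, not_and]
    constructor
    · rintro ⟨⟨hE, hj⟩, hℓ⟩
      refine ⟨hE, fun j hjlt => ?_⟩
      rcases Nat.lt_succ_iff_lt_or_eq.mp hjlt with h | h
      · exact hj j h
      · have : j = ℓ := Fin.ext h
        subst this; exact hℓ
    · rintro ⟨hE, hj⟩
      exact ⟨⟨hE, fun j h => hj j (Nat.lt_succ_of_lt h)⟩, hj ℓ (Nat.lt_succ_self _)⟩
  have hUtop : U s = Finset.univ.biUnion Es := by
    ext e; simp [hU, Fin.is_lt]
  have hU0 : U 0 = ∅ := by simp [hU]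
  set f : ℕ → ℝ := fun k => (nComp (E \ U k) : ℝ) with hf
  set a : Fin s → ℝ := fun ℓ => f ((ℓ : ℕ) + 1) - f (ℓ : ℕ) with ha
  set c : Fin s → ℝ := fun ℓ => ((Es ℓ).card : ℝ) with hcdef
  have hc : ∀ ℓ, 0 < c ℓ := fun ℓ => by
    simp [hcdef, Finset.card_pos.mpr (hne ℓ)]
  have htel : ∑ ℓ : Fin s, a ℓ = f s - f 0 := by
    rw [ha, Fin.sum_univ_eq_sum_range (fun i => f (i + 1) - f i), Finset.sum_range_sub]
  have hcard : ((Finset.univ.biUnion Es).card : ℝ) = ∑ ℓ, c ℓ := by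
    rw [Finset.card_biUnion (fun i _ j _ hij => hdisj i j hij)]
    push_cast; rfl
  have hneTot : (Finset.univ.biUnion Es).Nonempty := by
    obtain ⟨e, he⟩ := hne ⟨0, hs⟩
    exact ⟨e, Finset.mem_biUnion.mpr ⟨⟨0, hs⟩, Finset.mem_univ _, he⟩⟩
  have hcrTot : cutRate E (Finset.univ.biUnion Es) = (∑ ℓ, a ℓ) / (∑ ℓ, c ℓ) := by
    rw [cutRate, if_pos ⟨hV, hneTot⟩, htel, hcard, ← hUtop]
    congr 1
    simp [hf, hU0]
  have hcrℓ : ∀ ℓ, cutRate (E \ prevUnion Es ℓ) (Es ℓ) = a ℓ / c ℓ := by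
    intro ℓ
    rw [hprev ℓ, cutRate, if_pos ⟨hV, hne ℓ⟩, hstep ℓ]
  constructor
  · intro h
    have hm := mediant_ge' hs a c hc y (fun ℓ => by rw [← hcrℓ ℓ]; exact h ℓ)
    refine ⟨by rw [hcrTot]; exact hm.1, ?_⟩
    rw [hcrTot, hm.2]
    exact forall_congr' fun ℓ => by rw [hcrℓ ℓ]
  · intro h
    have hm := mediant_le' hs a c hc y (fun ℓ => by rw [← hcrℓ ℓ]; exact h ℓ)
    refine ⟨by rw [hcrTot]; exact hm.1, ?_⟩
    rw [hcrTot, hm.2]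
    exact forall_congr' fun ℓ => by rw [hcrℓ ℓ]
end

section
/- Let G=(V,E) be a finite connected graph and define opt := max over E'⊆E of CR(E'). If E'⊆E satisfies CR(E') = opt, then the cut-rate opt_{G∖E'} of the graph G∖E' (the maximum cut-rate over subsets of E∖E') satisfies opt_{G∖E'} ≤ opt. -/
open Finset

theorem stmt_2 {V : Type} [Fintype V] [DecidableEq V] (E E' : Finset (Sym2 V))
    (hconn : Conn E) (hsub : E' ⊆ E) (hopt : cutRate E E' = opt E) :
    opt (E \ E') ≤ opt E := by
  have hopt_nonneg : 0 ≤ opt E := by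
    have h : cutRate E ∅ ≤ opt E := Finset.le_sup' (fun E'' => cutRate E E'')
      (Finset.mem_powerset.mpr (Finset.empty_subset E))
    rw [cutRate, if_neg (by simp)] at h
    exact h
  apply Finset.sup'_le
  intro F hF
  rw [Finset.mem_powerset] at hF
  by_cases hFne : F.Nonempty
  · by_cases hV : 1 < Fintype.card V
    · by_cases hE' : E'.Nonempty
      · -- main case
        have hUsub : E' ∪ F ⊆ E :=
          Finset.union_subset hsub (hF.trans Finset.sdiff_subset)
        have hkey : cutRate E (E' ∪ F) ≤ opt E :=
          Finset.le_sup' _ (Finset.mem_powerset.mpr hUsub)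
        have hdisj : Disjoint E' F :=
          Finset.disjoint_right.mpr (fun a ha => (Finset.mem_sdiff.mp (hF ha)).2)
        have hcard : (E' ∪ F).card = E'.card + F.card :=
          Finset.card_union_of_disjoint hdisj
        have hsdiff : E \ (E' ∪ F) = (E \ E') \ F := by
          ext a; simp [Finset.mem_sdiff]; tauto
        set o := opt E with ho
        set A : ℝ := (nComp (E \ E') : ℝ)
        set B : ℝ := (nComp E : ℝ)
        set C : ℝ := (nComp ((E \ E') \ F) : ℝ)
        have hc1 : (0:ℝ) < E'.card := by
          exact_mod_cast Finset.card_pos.mpr hE'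
        have hc2 : (0:ℝ) < F.card := by
          exact_mod_cast Finset.card_pos.mpr hFne
        have h1 : A - B = o * E'.card := by
          rw [cutRate, if_pos ⟨hV, hE'⟩] at hopt
          field_simp at hopt
          linarith [hopt]
        have h2 : C - B ≤ o * (E'.card + F.card) := by
          rw [cutRate, if_pos ⟨hV, hE'.mono Finset.subset_union_left⟩, hsdiff] at hkey
          rw [div_le_iff₀ (by rw [hcard]; push_cast; linarith)] at hkey
          rw [hcard] at hkey
          push_cast at hkey ⊢
          linarith
        rw [cutRate, if_pos ⟨hV, hFne⟩]
        rw [div_le_iff₀ hc2]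
        linarith
      · -- E' empty: E \ E' = E
        rw [Finset.not_nonempty_iff_eq_empty] at hE'
        subst hE'
        rw [Finset.sdiff_empty] at hF ⊢
        exact Finset.le_sup' _ (Finset.mem_powerset.mpr hF)
    · rw [cutRate, if_neg (fun h => hV h.1)]
      exact hopt_nonneg
  · rw [cutRate, if_neg (fun h => hFne h.2)]
    exact hopt_nonneg
end

section
/- Let G=(V,E) be a finite connected graph with opt := max_{E'⊆E} CR(E'). If E', E'' ⊆ E both have cut-rate equal to opt and E''∩E' ≠ ∅, then CR(E''∩E') = opt. -/
open Finset

section Aux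

open SimpleGraph

variable {V : Type*}

lemma merge_reach {G : SimpleGraph V} {u v x y : V}
    (h : (G ⊔ edge u v).Reachable x y) :
    G.Reachable x y ∨ (G.Reachable x u ∧ G.Reachable v y) ∨
      (G.Reachable x v ∧ G.Reachable u y) := by
  rw [reachable_iff_reflTransGen] at h
  induction h with
  | refl => exact Or.inl (Reachable.refl x)
  | tail _ hadj ih =>
    rename_i b c _
    rcases hadj with hG | hE
    · rcases ih with h1 | ⟨h1, h2⟩ | ⟨h1, h2⟩
      · exact Or.inl (h1.trans hG.reachable)
      · exact Or.inr (Or.inl ⟨h1, h2.trans hG.reachable⟩)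
      · exact Or.inr (Or.inr ⟨h1, h2.trans hG.reachable⟩)
    · rw [edge_adj] at hE
      obtain ⟨(⟨rfl, rfl⟩ | ⟨rfl, rfl⟩), _⟩ := hE
      · rcases ih with h1 | ⟨h1, h2⟩ | ⟨h1, h2⟩
        · exact Or.inr (Or.inl ⟨h1, Reachable.refl _⟩)
        · exact Or.inl ((h1.trans h2.symm).symm.symm)
        · exact Or.inl h1
      · rcases ih with h1 | ⟨h1, h2⟩ | ⟨h1, h2⟩
        · exact Or.inr (Or.inr ⟨h1, Reachable.refl _⟩)
        · exact Or.inl h1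
        · exact Or.inl ((h1.trans h2.symm).symm.symm)

lemma card_comp_mono [Finite V] {G G' : SimpleGraph V} (h : G ≤ G') :
    Nat.card G'.ConnectedComponent ≤ Nat.card G.ConnectedComponent := by
  apply Nat.card_le_card_of_surjective
    (SimpleGraph.ConnectedComponent.map (Hom.ofLE h))
  intro c
  exact c.ind fun w => ⟨G.connectedComponentMk w, rfl⟩

lemma card_comp_sup_edge_of_reach [Finite V] {G : SimpleGraph V} {u v : V}
    (h : G.Reachable u v) :
    Nat.card (G ⊔ edge u v).ConnectedComponent = Nat.card G.ConnectedComponent := by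
  symm
  apply Nat.card_eq_of_bijective
    (SimpleGraph.ConnectedComponent.map (Hom.ofLE le_sup_left))
  constructor
  · intro c d
    refine SimpleGraph.ConnectedComponent.ind₂ (fun x y hxy => ?_) c d
    have hr : (G ⊔ edge u v).Reachable x y := SimpleGraph.ConnectedComponent.exact hxy
    rcases merge_reach hr with h1 | ⟨h1, h2⟩ | ⟨h1, h2⟩
    · exact SimpleGraph.ConnectedComponent.sound h1
    · exact SimpleGraph.ConnectedComponent.sound ((h1.trans h).trans h2)
    · exact SimpleGraph.ConnectedComponent.sound ((h1.trans h.symm).trans h2)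
  · intro c; exact c.ind fun w => ⟨G.connectedComponentMk w, rfl⟩

open Classical in
/-- the descended map from components of `G ⊔ edge u v` to components of `G`. -/
noncomputable def rho (G : SimpleGraph V) (u v : V) :
    (G ⊔ edge u v).ConnectedComponent → G.ConnectedComponent :=
  Quot.lift (fun x => if G.Reachable v x then G.connectedComponentMk u
      else G.connectedComponentMk x) (by
    intro x y (hxy : (G ⊔ edge u v).Reachable x y)
    rcases merge_reach hxy with h1 | ⟨h1, h2⟩ | ⟨h1, h2⟩
    · by_cases hvx : G.Reachable v x
      · rw [if_pos hvx, if_pos (hvx.trans h1)]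
      · rw [if_neg hvx, if_neg (fun hvy => hvx (hvy.trans h1.symm))]
        exact SimpleGraph.ConnectedComponent.sound h1
    · rw [if_pos h2]
      by_cases hvx : G.Reachable v x
      · rw [if_pos hvx]
      · rw [if_neg hvx]; exact SimpleGraph.ConnectedComponent.sound h1
    · rw [if_pos h1.symm]
      by_cases hvy : G.Reachable v y
      · rw [if_pos hvy]
      · rw [if_neg hvy]; exact SimpleGraph.ConnectedComponent.sound h2)

open Classical in
lemma rho_mk (G : SimpleGraph V) (u v x : V) :
    rho G u v ((G ⊔ edge u v).connectedComponentMk x)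
      = if G.Reachable v x then G.connectedComponentMk u
        else G.connectedComponentMk x := rfl

lemma card_comp_sup_edge_of_not_reach [Finite V] {G : SimpleGraph V} {u v : V}
    (h : ¬ G.Reachable u v) :
    Nat.card G.ConnectedComponent
      = Nat.card (G ⊔ edge u v).ConnectedComponent + 1 := by
  classical
  have huv : u ≠ v := fun he => h (he ▸ Reachable.refl u)
  have hedge : (G ⊔ edge u v).Reachable u v :=
    Adj.reachable (Or.inr ((edge_adj u v u v).mpr ⟨Or.inl ⟨rfl, rfl⟩, huv⟩))
  have key : Nat.card ((G ⊔ edge u v).ConnectedComponent ⊕ Unit)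
      = Nat.card G.ConnectedComponent := by
    apply Nat.card_eq_of_bijective
      (fun z => Sum.elim (rho G u v) (fun _ => G.connectedComponentMk v) z)
    constructor
    · rintro (c | _) (d | _) hcd
      · refine congrArg Sum.inl ?_
        revert hcd
        refine SimpleGraph.ConnectedComponent.ind₂ (fun x y hxy => ?_) c d
        simp only [Sum.elim_inl, rho_mk] at hxy
        by_cases hvx : G.Reachable v x <;> by_cases hvy : G.Reachable v y <;>
          simp only [if_pos, if_neg, hvx, hvy, if_true, if_false] at hxy
        · exact SimpleGraph.ConnectedComponent.sound
            ((hvx.symm.mono le_sup_left).trans (hvy.mono le_sup_left))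
        · have huy : G.Reachable u y := SimpleGraph.ConnectedComponent.exact hxy
          exact SimpleGraph.ConnectedComponent.sound
            (((hvx.symm.mono le_sup_left).trans hedge.symm).trans (huy.mono le_sup_left))
        · have hxu : G.Reachable x u := SimpleGraph.ConnectedComponent.exact hxy
          exact SimpleGraph.ConnectedComponent.sound
            (((hxu.mono le_sup_left).trans hedge).trans (hvy.mono le_sup_left))
        · exact SimpleGraph.ConnectedComponent.sound
            ((SimpleGraph.ConnectedComponent.exact hxy).mono le_sup_left)
      · exfalso
        revert hcd
        refine SimpleGraph.ConnectedComponent.ind (fun x hxy => ?_) c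
        simp only [Sum.elim_inl, Sum.elim_inr, rho_mk] at hxy
        by_cases hvx : G.Reachable v x <;>
          simp only [if_pos, if_neg, hvx, if_true, if_false] at hxy
        · exact h (SimpleGraph.ConnectedComponent.exact hxy)
        · exact hvx (SimpleGraph.ConnectedComponent.exact hxy).symm
      · exfalso
        revert hcd
        refine SimpleGraph.ConnectedComponent.ind (fun x hxy => ?_) d
        simp only [Sum.elim_inl, Sum.elim_inr, rho_mk] at hxy
        by_cases hvx : G.Reachable v x <;>
          simp only [if_pos, if_neg, hvx, if_true, if_false] at hxy
        · exact h (SimpleGraph.ConnectedComponent.exact hxy).symm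
        · exact hvx (SimpleGraph.ConnectedComponent.exact hxy)
      · rfl
    · intro c
      refine c.ind fun x => ?_
      by_cases hvx : G.Reachable v x
      · exact ⟨Sum.inr (), SimpleGraph.ConnectedComponent.sound hvx⟩
      · exact ⟨Sum.inl ((G ⊔ edge u v).connectedComponentMk x), by
          simp only [Sum.elim_inl, rho_mk, if_neg hvx]⟩
  rw [← key, Nat.card_sum]
  simp

end Aux

section NComp

open SimpleGraph

variable {V : Type} [Fintype V] [DecidableEq V]

lemma fromEdgeSet_insert' (u v : V) (X : Finset (Sym2 V)) :
    SimpleGraph.fromEdgeSet (↑(insert (s(u, v)) X) : Set (Sym2 V))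
      = SimpleGraph.fromEdgeSet (↑X : Set (Sym2 V)) ⊔ edge u v := by
  rw [Finset.coe_insert, Set.insert_eq, fromEdgeSet_union, sup_comm]
  rfl

lemma nComp_mono {X Y : Finset (Sym2 V)} (h : X ⊆ Y) : nComp Y ≤ nComp X :=
  card_comp_mono (fromEdgeSet_mono (by exact_mod_cast h))

lemma nComp_le_insert_add_one (e : Sym2 V) (X : Finset (Sym2 V)) :
    nComp X ≤ nComp (insert e X) + 1 := by
  induction e using Sym2.ind with
  | _ u v =>
    unfold nComp
    rw [fromEdgeSet_insert']
    by_cases hr : (SimpleGraph.fromEdgeSet (↑X : Set (Sym2 V))).Reachable u v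
    · rw [card_comp_sup_edge_of_reach hr]; omega
    · rw [← card_comp_sup_edge_of_not_reach hr]

lemma nComp_step (e : Sym2 V) {X Y : Finset (Sym2 V)} (h : X ⊆ Y) :
    nComp (insert e X) + nComp Y ≤ nComp (insert e Y) + nComp X := by
  induction e using Sym2.ind with
  | _ u v =>
    by_cases hr : (SimpleGraph.fromEdgeSet (↑X : Set (Sym2 V))).Reachable u v
    · have hrY : (SimpleGraph.fromEdgeSet (↑Y : Set (Sym2 V))).Reachable u v :=
        hr.mono (fromEdgeSet_mono (by exact_mod_cast h))
      have e1 : nComp (insert (s(u, v)) X) = nComp X := by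
        unfold nComp; rw [fromEdgeSet_insert', card_comp_sup_edge_of_reach hr]
      have e2 : nComp (insert (s(u, v)) Y) = nComp Y := by
        unfold nComp; rw [fromEdgeSet_insert', card_comp_sup_edge_of_reach hrY]
      omega
    · have e1 : nComp X = nComp (insert (s(u, v)) X) + 1 := by
        unfold nComp; rw [fromEdgeSet_insert']
        exact card_comp_sup_edge_of_not_reach hr
      have e2 : nComp Y ≤ nComp (insert (s(u, v)) Y) + 1 := nComp_le_insert_add_one _ _
      omega

lemma nComp_super_aux (D : Finset (Sym2 V)) :
    ∀ {A B : Finset (Sym2 V)}, A ⊆ B →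
      nComp (A ∪ D) + nComp B ≤ nComp (B ∪ D) + nComp A := by
  induction D using Finset.induction_on with
  | empty => intro A B h; simp only [Finset.union_empty]; omega
  | @insert a D ha ih =>
    intro A B h
    rw [Finset.union_insert, Finset.union_insert]
    have h1 := nComp_step (V := V) a (Finset.union_subset_union h (Finset.Subset.refl D))
    have h2 := ih h
    omega

lemma nComp_supermodular (X Y : Finset (Sym2 V)) :
    nComp X + nComp Y ≤ nComp (X ∪ Y) + nComp (X ∩ Y) := by
  have h := nComp_super_aux (Y \ X) (Finset.inter_subset_left (s₁ := X) (s₂ := Y))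
  have e1 : X ∩ Y ∪ Y \ X = Y := by
    rw [Finset.inter_comm, Finset.union_comm, Finset.sdiff_union_inter]
  have e2 : X ∪ Y \ X = X ∪ Y := Finset.union_sdiff_self_eq_union
  rw [e1, e2] at h
  omega

end NComp

theorem stmt_3 {V : Type} [Fintype V] [DecidableEq V] (E E' E'' : Finset (Sym2 V))
    (hconn : Conn E) (hsub' : E' ⊆ E) (hsub'' : E'' ⊆ E)
    (h' : cutRate E E' = opt E) (h'' : cutRate E E'' = opt E)
    (hne : (E'' ∩ E').Nonempty) :
    cutRate E (E'' ∩ E') = opt E := by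
  classical
  by_cases hV : 1 < Fintype.card V
  · set o := opt E with ho
    have hne' : E'.Nonempty := hne.mono (Finset.inter_subset_right)
    have hne'' : E''.Nonempty := hne.mono (Finset.inter_subset_left)
    have hbound : ∀ X : Finset (Sym2 V), X ⊆ E →
        (nComp (E \ X) : ℝ) - nComp E ≤ o * X.card := by
      intro X hX
      rcases X.eq_empty_or_nonempty with rfl | hXne
      · simp
      · have hle : cutRate E X ≤ o :=
          Finset.le_sup' (fun Y => cutRate E Y) (Finset.mem_powerset.mpr hX)
        rw [cutRate, if_pos ⟨hV, hXne⟩] at hle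
        have hc : (0 : ℝ) < X.card := by
          exact_mod_cast Finset.card_pos.mpr hXne
        calc (nComp (E \ X) : ℝ) - nComp E
            = ((nComp (E \ X) : ℝ) - nComp E) / X.card * X.card := by
              field_simp
          _ ≤ o * X.card := by
              exact mul_le_mul_of_nonneg_right hle hc.le
    have hval : ∀ X : Finset (Sym2 V), X.Nonempty → cutRate E X = o →
        (nComp (E \ X) : ℝ) - nComp E = o * X.card := by
      intro X hXne hXo
      rw [cutRate, if_pos ⟨hV, hXne⟩] at hXo
      have hc : (X.card : ℝ) ≠ 0 := by
        exact_mod_cast Finset.card_pos.mpr hXne |>.ne'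
      rw [div_eq_iff hc] at hXo
      exact hXo
    have f1 := hval E' hne' h'
    have f2 := hval E'' hne'' h''
    have f3 := hbound (E'' ∩ E') (Finset.inter_subset_left.trans hsub'')
    have f4 := hbound (E' ∪ E'') (Finset.union_subset hsub' hsub'')
    have hsuper := nComp_supermodular (E \ E') (E \ E'')
    have hd1 : (E \ E') ∪ (E \ E'') = E \ (E'' ∩ E') := by
      rw [Finset.sdiff_inter_distrib_right, Finset.union_comm]
    have hd2 : (E \ E') ∩ (E \ E'') = E \ (E' ∪ E'') := by
      rw [Finset.sdiff_union_distrib]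
    rw [hd1, hd2] at hsuper
    have hcards : (E'' ∩ E').card + (E' ∪ E'').card = E'.card + E''.card := by
      rw [Finset.inter_comm, Finset.card_inter_add_card_union]
    have hsuperR : (nComp (E \ E') : ℝ) + nComp (E \ E'')
        ≤ nComp (E \ (E'' ∩ E')) + nComp (E \ (E' ∪ E'')) := by
      exact_mod_cast hsuper
    have hcardsR : ((E'' ∩ E').card : ℝ) + (E' ∪ E'').card
        = E'.card + E''.card := by exact_mod_cast hcards
    have hmul : o * ((#(E'' ∩ E') : ℝ)) + o * ((#(E' ∪ E'') : ℝ))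
        = o * (#E' : ℝ) + o * (#E'' : ℝ) := by
      rw [← mul_add, ← mul_add, hcardsR]
    have hkey : (nComp (E \ (E'' ∩ E')) : ℝ) - nComp E = o * (E'' ∩ E').card := by
      linarith
    rw [cutRate, if_pos ⟨hV, hne⟩, hkey]
    have hc : ((E'' ∩ E').card : ℝ) ≠ 0 := by
      exact_mod_cast Finset.card_pos.mpr hne |>.ne'
    field_simp
  · have hz : ∀ X : Finset (Sym2 V), cutRate E X = 0 := by
      intro X
      rw [cutRate, if_neg (by tauto)]
    rw [hz, ← h', hz]
end

section
/- Let G=(V,E) be a finite connected graph with opt := max_{E'⊆E} CR(E'). If E',E''⊆E both have cut-rate opt, E' is a prime-set (a minimal set achieving cut-rate opt), then either E' ⊆ E'' or E' ∩ E'' = ∅. -/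
open Finset

/-- A prime-set: a minimal (under inclusion) subset achieving cut-rate `opt E`. -/
def IsPrimeSet {V : Type} [Fintype V] [DecidableEq V] (E E' : Finset (Sym2 V)) : Prop :=
  E' ⊆ E ∧ cutRate E E' = opt E ∧ ∀ F, F ⊂ E' → cutRate E F ≠ opt E

set_option linter.unusedSectionVars false

namespace StmtAux

open SimpleGraph

variable {V : Type} [Fintype V] [DecidableEq V]

lemma adj_insert {S : Finset (Sym2 V)} {u v a b : V}
    (h : (fromEdgeSet (↑(insert s(u,v) S) : Set (Sym2 V))).Adj a b) :
    (fromEdgeSet (↑S : Set (Sym2 V))).Adj a b ∨ (a = u ∧ b = v) ∨ (a = v ∧ b = u) := by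
  rw [fromEdgeSet_adj] at h
  obtain ⟨hm, hne⟩ := h
  rw [Finset.coe_insert, Set.mem_insert_iff] at hm
  rcases hm with h1 | h2
  · rw [Sym2.eq_iff] at h1; tauto
  · exact Or.inl ((fromEdgeSet_adj _).mpr ⟨h2, hne⟩)

lemma reach_insert {S : Finset (Sym2 V)} {u v a b : V}
    (h : (fromEdgeSet (↑(insert s(u,v) S) : Set (Sym2 V))).Reachable a b) :
    (fromEdgeSet (↑S : Set (Sym2 V))).Reachable a b ∨
      ((fromEdgeSet (↑S : Set (Sym2 V))).Reachable a u ∧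
       (fromEdgeSet (↑S : Set (Sym2 V))).Reachable v b) ∨
      ((fromEdgeSet (↑S : Set (Sym2 V))).Reachable a v ∧
       (fromEdgeSet (↑S : Set (Sym2 V))).Reachable u b) := by
  obtain ⟨w⟩ := h
  induction w with
  | nil => exact Or.inl (Reachable.refl _)
  | @cons a c b hac p ih =>
    rcases adj_insert hac with h1 | ⟨rfl, rfl⟩ | ⟨rfl, rfl⟩
    · rcases ih with h2 | ⟨h2, h3⟩ | ⟨h2, h3⟩
      · exact Or.inl (h1.reachable.trans h2)
      · exact Or.inr (Or.inl ⟨h1.reachable.trans h2, h3⟩)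
      · exact Or.inr (Or.inr ⟨h1.reachable.trans h2, h3⟩)
    · rcases ih with h2 | ⟨h2, h3⟩ | ⟨h2, h3⟩
      · exact Or.inr (Or.inl ⟨Reachable.refl _, h2⟩)
      · exact Or.inr (Or.inl ⟨Reachable.refl _, h3⟩)
      · exact Or.inl h3
    · rcases ih with h2 | ⟨h2, h3⟩ | ⟨h2, h3⟩
      · exact Or.inr (Or.inr ⟨Reachable.refl _, h2⟩)
      · exact Or.inl h3
      · exact Or.inr (Or.inr ⟨Reachable.refl _, h3⟩)

/-- map on components induced by inserting an edge -/
noncomputable def phi (e : Sym2 V) (S : Finset (Sym2 V)) :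
    (fromEdgeSet (↑S : Set (Sym2 V))).ConnectedComponent →
      (fromEdgeSet (↑(insert e S) : Set (Sym2 V))).ConnectedComponent :=
  ConnectedComponent.map (Hom.ofLE
    (fromEdgeSet_mono (by rw [Finset.coe_insert]; exact Set.subset_insert _ _)))

lemma phi_mk (e : Sym2 V) (S : Finset (Sym2 V)) (a : V) :
    phi e S ((fromEdgeSet (↑S : Set (Sym2 V))).connectedComponentMk a)
      = (fromEdgeSet (↑(insert e S) : Set (Sym2 V))).connectedComponentMk a := rfl

lemma phi_surj (e : Sym2 V) (S : Finset (Sym2 V)) : Function.Surjective (phi e S) := by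
  intro c
  refine c.ind fun a => ⟨_, phi_mk e S a⟩

lemma nComp_insert_le (e : Sym2 V) (S : Finset (Sym2 V)) :
    nComp (insert e S) ≤ nComp S :=
  Nat.card_le_card_of_surjective _ (phi_surj e S)

lemma nComp_le_insert (u v : V) (S : Finset (Sym2 V)) :
    nComp S ≤ nComp (insert s(u,v) S) + 1 := by
  classical
  set G := fromEdgeSet (↑S : Set (Sym2 V))
  have hinj : Function.Injective (fun c : G.ConnectedComponent =>
      if c = G.connectedComponentMk v then none else some (phi s(u,v) S c)) := by
    intro x y hxy
    by_cases hx : x = G.connectedComponentMk v <;>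
      by_cases hy : y = G.connectedComponentMk v <;>
      simp only [hx, hy, if_pos, if_neg, if_true, reduceIte] at hxy
    · exact hx.trans hy.symm
    · exact absurd hxy (by simp)
    · exact absurd hxy (by simp)
    · revert hxy hx hy
      refine ConnectedComponent.ind₂ (fun a b hxv hyv hsome => ?_) x y
      have hxy := Option.some_injective _ hsome
      rw [phi_mk, phi_mk, ConnectedComponent.eq] at hxy
      rcases reach_insert hxy with h1 | ⟨h1, h2⟩ | ⟨h1, h2⟩
      · exact ConnectedComponent.eq.mpr h1
      · exact absurd (ConnectedComponent.eq.mpr h2.symm) hyv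
      · exact absurd (ConnectedComponent.eq.mpr h1) hxv
  calc nComp S ≤ Nat.card (Option (fromEdgeSet (↑(insert s(u,v) S) : Set (Sym2 V))).ConnectedComponent) :=
        Nat.card_le_card_of_injective _ hinj
    _ = nComp (insert s(u,v) S) + 1 := by
        rw [Nat.card_eq_fintype_card, Fintype.card_option, nComp, Nat.card_eq_fintype_card]

lemma nComp_insert_eq_of_reachable {u v : V} {S : Finset (Sym2 V)}
    (hR : (fromEdgeSet (↑S : Set (Sym2 V))).Reachable u v) :
    nComp (insert s(u,v) S) = nComp S := by
  refine le_antisymm (nComp_insert_le _ _) (Nat.card_le_card_of_injective (phi s(u,v) S) ?_)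
  refine ConnectedComponent.ind₂ (fun a b hxy => ?_)
  rw [phi_mk, phi_mk, ConnectedComponent.eq] at hxy
  rcases reach_insert hxy with h1 | ⟨h1, h2⟩ | ⟨h1, h2⟩
  · exact ConnectedComponent.eq.mpr h1
  · exact ConnectedComponent.eq.mpr ((h1.trans hR).trans h2)
  · exact ConnectedComponent.eq.mpr ((h1.trans hR.symm).trans h2)

lemma nComp_insert_lt {u v : V} {S : Finset (Sym2 V)} (huv : u ≠ v)
    (hR : ¬ (fromEdgeSet (↑S : Set (Sym2 V))).Reachable u v) :
    nComp (insert s(u,v) S) < nComp S := by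
  refine lt_of_le_of_ne (nComp_insert_le _ _) (fun hcard => ?_)
  have hbij : Function.Bijective (phi s(u,v) S) :=
    (Nat.bijective_iff_surjective_and_card _).mpr ⟨phi_surj _ _, hcard.symm⟩
  have hadj : (fromEdgeSet (↑(insert s(u,v) S) : Set (Sym2 V))).Adj u v :=
    (fromEdgeSet_adj _).mpr ⟨by simp, huv⟩
  have : phi s(u,v) S ((fromEdgeSet (↑S : Set (Sym2 V))).connectedComponentMk u)
      = phi s(u,v) S ((fromEdgeSet (↑S : Set (Sym2 V))).connectedComponentMk v) := by
    rw [phi_mk, phi_mk]; exact ConnectedComponent.eq.mpr hadj.reachable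
  exact hR (ConnectedComponent.eq.mp (hbij.1 this))


lemma nComp_insert_diag (u : V) (S : Finset (Sym2 V)) :
    nComp (insert s(u,u) S) = nComp S := by
  have : fromEdgeSet (↑(insert s(u,u) S) : Set (Sym2 V))
      = fromEdgeSet (↑S : Set (Sym2 V)) := by
    ext a b
    simp only [fromEdgeSet_adj, Finset.coe_insert, Set.mem_insert_iff, Sym2.eq_iff]
    constructor
    · rintro ⟨h1 | h2, hne⟩
      · rcases h1 with ⟨rfl, rfl⟩ | ⟨rfl, rfl⟩ <;> exact absurd rfl hne
      · exact ⟨h2, hne⟩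
    · rintro ⟨h, hne⟩; exact ⟨Or.inr h, hne⟩
  rw [nComp, this, nComp]

lemma key_edge {S T : Finset (Sym2 V)} (hST : S ⊆ T) (e : Sym2 V) :
    nComp T + nComp (insert e S) ≤ nComp S + nComp (insert e T) := by
  induction e using Sym2.ind with
  | _ u v =>
    by_cases huv : u = v
    · subst huv
      rw [nComp_insert_diag, nComp_insert_diag]
      omega
    by_cases hR : (fromEdgeSet (↑T : Set (Sym2 V))).Reachable u v
    · rw [nComp_insert_eq_of_reachable hR]
      have := nComp_insert_le s(u,v) S
      omega
    · have h1 := nComp_le_insert u v T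
      have hRS : ¬ (fromEdgeSet (↑S : Set (Sym2 V))).Reachable u v := fun h =>
        hR (h.mono (fromEdgeSet_mono (Finset.coe_subset.mpr hST)))
      have h2 := nComp_insert_lt huv hRS
      omega

lemma key_union {S T : Finset (Sym2 V)} (hST : S ⊆ T) (X : Finset (Sym2 V)) :
    nComp T + nComp (S ∪ X) ≤ nComp S + nComp (T ∪ X) := by
  classical
  induction X using Finset.induction with
  | empty => simp only [Finset.union_empty]; omega
  | @insert e X he ih =>
    have h := key_edge (Finset.union_subset_union hST (Finset.Subset.refl X)) e
    rw [Finset.union_insert, Finset.union_insert]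
    omega

lemma supermodular (A B : Finset (Sym2 V)) :
    nComp A + nComp B ≤ nComp (A ∩ B) + nComp (A ∪ B) := by
  have h := key_union (Finset.inter_subset_left (s₁ := A) (s₂ := B)) B
  rwa [show A ∩ B ∪ B = B by ext x; simp +contextual [Finset.mem_union, Finset.mem_inter]] at h

end StmtAux

theorem stmt_4 {V : Type} [Fintype V] [DecidableEq V] (E E' E'' : Finset (Sym2 V))
    (hconn : Conn E) (hsub'' : E'' ⊆ E)
    (hprime : IsPrimeSet E E') (h'' : cutRate E E'' = opt E) :
    E' ⊆ E'' ∨ Disjoint E' E'' := by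
  classical
  by_cases hV : 1 < Fintype.card V
  · rcases E'.eq_empty_or_nonempty with rfl | hne'
    · exact Or.inl (Finset.empty_subset _)
    rcases E''.eq_empty_or_nonempty with rfl | hne''
    · exact Or.inr (Finset.disjoint_empty_right _)
    by_cases hsub : E' ⊆ E''
    · exact Or.inl hsub
    by_cases hdisj : Disjoint E' E''
    · exact Or.inr hdisj
    exfalso
    obtain ⟨hsubE, hrate', hmin⟩ := hprime
    have hFne : (E' ∩ E'').Nonempty := Finset.not_disjoint_iff_nonempty_inter.mp hdisj
    have hFss : E' ∩ E'' ⊂ E' := by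
      rw [Finset.ssubset_def]
      refine ⟨Finset.inter_subset_left, fun hcontra => hsub fun x hx => ?_⟩
      exact (Finset.mem_inter.mp (hcontra hx)).2
    refine hmin (E' ∩ E'') hFss ?_
    have key : ∀ X : Finset (Sym2 V), X ⊆ E → X.Nonempty →
        (nComp (E \ X) : ℝ) - nComp E ≤ opt E * X.card := by
      intro X hXE hXne
      have hle : cutRate E X ≤ opt E :=
        Finset.le_sup' (fun Y => cutRate E Y) (Finset.mem_powerset.mpr hXE)
      rw [cutRate, if_pos ⟨hV, hXne⟩] at hle
      have hc : (0 : ℝ) < X.card := by exact_mod_cast hXne.card_pos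
      rwa [div_le_iff₀ hc] at hle
    have hcE' : (0 : ℝ) < E'.card := by exact_mod_cast hne'.card_pos
    have hcE'' : (0 : ℝ) < E''.card := by exact_mod_cast hne''.card_pos
    have hcF : (0 : ℝ) < (E' ∩ E'').card := by exact_mod_cast hFne.card_pos
    have eq' : (nComp (E \ E') : ℝ) - nComp E = opt E * E'.card := by
      rw [cutRate, if_pos ⟨hV, hne'⟩, div_eq_iff hcE'.ne'] at hrate'
      exact hrate'
    have eq'' : (nComp (E \ E'') : ℝ) - nComp E = opt E * E''.card := by
      rw [cutRate, if_pos ⟨hV, hne''⟩, div_eq_iff hcE''.ne'] at h''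
      exact h''
    have hU : E' ∪ E'' ⊆ E := Finset.union_subset hsubE hsub''
    have hUne : (E' ∪ E'').Nonempty := hne'.mono Finset.subset_union_left
    have hsupmod := StmtAux.supermodular (E \ E') (E \ E'')
    have h1 : (E \ E') ∩ (E \ E'') = E \ (E' ∪ E'') := by
      ext x; simp only [Finset.mem_inter, Finset.mem_sdiff, Finset.mem_union]; tauto
    have h2 : (E \ E') ∪ (E \ E'') = E \ (E' ∩ E'') := by
      ext x; simp only [Finset.mem_union, Finset.mem_sdiff, Finset.mem_inter]; tauto
    rw [h1, h2] at hsupmod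
    have hcast : (nComp (E \ E') : ℝ) + nComp (E \ E'')
        ≤ (nComp (E \ (E' ∪ E'')) : ℝ) + nComp (E \ (E' ∩ E'')) := by
      exact_mod_cast hsupmod
    have hcards : ((E' ∪ E'').card : ℝ) + (E' ∩ E'').card = E'.card + E''.card := by
      exact_mod_cast Finset.card_union_add_card_inter E' E''
    have hmulcards : opt E * ((E' ∪ E'').card : ℝ) + opt E * (E' ∩ E'').card
        = opt E * E'.card + opt E * E''.card := by
      rw [← mul_add, ← mul_add, hcards]
    have hgU := key (E' ∪ E'') hU hUne
    have hgF_le := key (E' ∩ E'') (hFss.subset.trans hsubE) hFne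
    have hgF : (nComp (E \ (E' ∩ E'')) : ℝ) - nComp E = opt E * (E' ∩ E'').card := by
      linarith
    rw [cutRate, if_pos ⟨hV, hFne⟩, hgF, mul_div_assoc, div_self hcF.ne', mul_one]
  · have hzero : ∀ X ∈ E.powerset, cutRate E X = (0 : ℝ) := fun X _ => by
      rw [cutRate, if_neg fun h => hV h.1]
    have hopt : opt E = 0 := by
      rw [opt, Finset.sup'_congr (Finset.powerset_nonempty E) rfl hzero,
        Finset.sup'_const]
    rcases E'.eq_empty_or_nonempty with rfl | hne'
    · exact Or.inl (Finset.empty_subset _)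
    · exfalso
      refine hprime.2.2 ∅ (Finset.empty_ssubset.mpr hne') ?_
      rw [hopt, cutRate, if_neg (by simp)]
end

section
/- Let G=(V,E) be a finite connected graph, α a probability distribution on E with distinct weights x_1 > … > x_m ≥ 0 and weight classes E_i^α = {e : α(e) = x_i}. If H is a minimum-weight connected spanning subgraph of (G,α), then for every ℓ with x_ℓ > 0, the number of edges of H in E_ℓ^α equals C_G(E_1^α∪…∪E_ℓ^α) − C_G(E_1^α∪…∪E_{ℓ−1}^α). -/
open Finset

/-- Union of the weight classes with index `≤ ℓ`. -/
noncomputable def upToLE {V : Type} [Fintype V] [DecidableEq V] {m : ℕ}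
    (Ecl : Fin m → Finset (Sym2 V)) (ℓ : Fin m) : Finset (Sym2 V) :=
  (Finset.univ.filter (fun j : Fin m => j ≤ ℓ)).biUnion Ecl

/-- Union of the weight classes with index `< ℓ`. -/
noncomputable def upToLT {V : Type} [Fintype V] [DecidableEq V] {m : ℕ}
    (Ecl : Fin m → Finset (Sym2 V)) (ℓ : Fin m) : Finset (Sym2 V) :=
  (Finset.univ.filter (fun j : Fin m => j < ℓ)).biUnion Ecl

/-- `x`, `Ecl` are the distinct weights and weight classes of the distribution `α` on `E`. -/
def IsWeightClasses {V : Type} [Fintype V] [DecidableEq V] (E : Finset (Sym2 V))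
    (α : Sym2 V → ℝ) {m : ℕ} (x : Fin m → ℝ) (Ecl : Fin m → Finset (Sym2 V)) : Prop :=
  StrictAnti x ∧ (∀ i, 0 ≤ x i) ∧
  (∀ i e, e ∈ Ecl i ↔ e ∈ E ∧ α e = x i) ∧
  (∀ e ∈ E, ∃ i, α e = x i)

/-- The cut-rate `cr_ℓ^α` of the `ℓ`-th weight class. -/
noncomputable def crI {V : Type} [Fintype V] [DecidableEq V] (E : Finset (Sym2 V))
    {m : ℕ} (Ecl : Fin m → Finset (Sym2 V)) (ℓ : Fin m) : ℝ :=
  ((nComp (E \ upToLE Ecl ℓ) : ℝ) - nComp (E \ upToLT Ecl ℓ)) / (Ecl ℓ).card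

set_option linter.unusedSectionVars false
set_option linter.unusedVariables false

section Aux
variable {V : Type} [Fintype V] [DecidableEq V]

lemma reach_rec {S : Set (Sym2 V)} (r : V → V → Prop)
    (hr : ∀ a, r a a) (ht : ∀ a b c, r a b → r b c → r a c)
    (he : ∀ a b : V, s(a,b) ∈ S → a ≠ b → r a b)
    {u v : V} (h : (SimpleGraph.fromEdgeSet S).Reachable u v) : r u v := by
  obtain ⟨w⟩ := h
  induction w with
  | nil => exact hr _
  | cons hadj _ ih =>
      rw [SimpleGraph.fromEdgeSet_adj] at hadj
      exact ht _ _ _ (he _ _ hadj.1 hadj.2) ih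

lemma reach_insert_cases {A : Set (Sym2 V)} {u v a b : V}
    (hab : (SimpleGraph.fromEdgeSet (insert s(u,v) A)).Reachable a b) :
    (SimpleGraph.fromEdgeSet A).Reachable a b ∨
      ((SimpleGraph.fromEdgeSet A).Reachable a u ∧ (SimpleGraph.fromEdgeSet A).Reachable v b) ∨
      ((SimpleGraph.fromEdgeSet A).Reachable a v ∧ (SimpleGraph.fromEdgeSet A).Reachable u b) := by
  set G := SimpleGraph.fromEdgeSet A with hG
  refine reach_rec (fun a b => G.Reachable a b ∨ (G.Reachable a u ∧ G.Reachable v b) ∨ (G.Reachable a v ∧ G.Reachable u b)) (fun a => Or.inl (SimpleGraph.Reachable.refl a)) ?_ ?_ hab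
  · rintro a b c (h1 | ⟨h1, h2⟩ | ⟨h1, h2⟩) (h3 | ⟨h3, h4⟩ | ⟨h3, h4⟩)
    · exact Or.inl (h1.trans h3)
    · exact Or.inr (Or.inl ⟨h1.trans h3, h4⟩)
    · exact Or.inr (Or.inr ⟨h1.trans h3, h4⟩)
    · exact Or.inr (Or.inl ⟨h1, h2.trans h3⟩)
    · exact Or.inl ((h1.trans (h2.trans h3).symm).trans h4)
    · exact Or.inl (h1.trans h4)
    · exact Or.inr (Or.inr ⟨h1, h2.trans h3⟩)
    · exact Or.inl (h1.trans h4)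
    · exact Or.inl ((h1.trans (h2.trans h3).symm).trans h4)
  · intro x y hmem hne
    rw [Set.mem_insert_iff] at hmem
    rcases hmem with heq | hmem
    · rw [Sym2.eq_iff] at heq
      rcases heq with ⟨rfl, rfl⟩ | ⟨rfl, rfl⟩
      · exact Or.inr (Or.inl ⟨SimpleGraph.Reachable.refl _, SimpleGraph.Reachable.refl _⟩)
      · exact Or.inr (Or.inr ⟨SimpleGraph.Reachable.refl _, SimpleGraph.Reachable.refl _⟩)
    · exact Or.inl ((SimpleGraph.fromEdgeSet_adj A).2 ⟨hmem, hne⟩).reachable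

end Aux
section Aux2
variable {V : Type} [Fintype V] [DecidableEq V]

lemma nComp_insert (A : Finset (Sym2 V)) {u v : V}
    (hnr : ¬ (SimpleGraph.fromEdgeSet (↑A : Set (Sym2 V))).Reachable u v) :
    nComp (insert s(u,v) A) + 1 = nComp A := by
  classical
  have huv : u ≠ v := by rintro rfl; exact hnr (SimpleGraph.Reachable.refl u)
  have hcoe : (↑(insert s(u,v) A) : Set (Sym2 V)) = insert s(u,v) (↑A : Set (Sym2 V)) :=
    Finset.coe_insert _ _
  set G := SimpleGraph.fromEdgeSet (↑A : Set (Sym2 V)) with hG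
  set G' := SimpleGraph.fromEdgeSet (insert s(u,v) (↑A : Set (Sym2 V))) with hG'
  have hle : G ≤ G' := SimpleGraph.fromEdgeSet_mono (Set.subset_insert _ _)
  have hadj : G'.Adj u v :=
    (SimpleGraph.fromEdgeSet_adj _).2 ⟨Set.mem_insert _ _, huv⟩
  have hkey : ∀ a b : V, G'.Reachable a b →
      G.Reachable a b ∨ (G.Reachable a u ∧ G.Reachable v b) ∨
        (G.Reachable a v ∧ G.Reachable u b) := fun a b hab => reach_insert_cases hab
  set f : G.ConnectedComponent → Option G'.ConnectedComponent :=
    fun c => if c = G.connectedComponentMk v then none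
      else some (c.map (SimpleGraph.Hom.ofLE hle)) with hf
  have hmapmk : ∀ w : V, (G.connectedComponentMk w).map (SimpleGraph.Hom.ofLE hle)
      = G'.connectedComponentMk w := fun w => rfl
  have hbij : Function.Bijective f := by
    constructor
    · intro c d
      refine SimpleGraph.ConnectedComponent.ind₂ (fun a b => ?_) c d
      intro hcd
      by_cases h1 : G.connectedComponentMk a = G.connectedComponentMk v <;>
        by_cases h2 : G.connectedComponentMk b = G.connectedComponentMk v
      · rw [h1, h2]
      · simp only [hf, if_pos h1, if_neg h2] at hcd
        exact absurd hcd (by simp)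
      · simp only [hf, if_neg h1, if_pos h2] at hcd
        exact absurd hcd (by simp)
      · simp only [hf, if_neg h1, if_neg h2, hmapmk, Option.some_inj,
          SimpleGraph.ConnectedComponent.eq] at hcd
        rcases hkey a b hcd with h | ⟨ha, hb⟩ | ⟨ha, hb⟩
        · exact SimpleGraph.ConnectedComponent.sound h
        · exact absurd (SimpleGraph.ConnectedComponent.sound hb.symm) h2
        · exact absurd (SimpleGraph.ConnectedComponent.sound ha) h1
    · rintro (_ | c)
      · exact ⟨G.connectedComponentMk v, by simp [hf]⟩
      · induction c using SimpleGraph.ConnectedComponent.ind with | _ a =>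
        by_cases hav : G.Reachable a v
        · refine ⟨G.connectedComponentMk u, ?_⟩
          have h1 : G.connectedComponentMk u ≠ G.connectedComponentMk v := by
            rw [Ne, SimpleGraph.ConnectedComponent.eq]; exact hnr
          simp only [hf, if_neg h1, hmapmk, Option.some_inj,
            SimpleGraph.ConnectedComponent.eq]
          exact hadj.reachable.trans ((hav.mono hle).symm)
        · refine ⟨G.connectedComponentMk a, ?_⟩
          have h1 : G.connectedComponentMk a ≠ G.connectedComponentMk v := by
            rw [Ne, SimpleGraph.ConnectedComponent.eq]; exact hav
          simp only [hf, if_neg h1, hmapmk]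
  haveI : Finite G'.ConnectedComponent :=
    Finite.of_surjective G'.connectedComponentMk
      (fun c => SimpleGraph.ConnectedComponent.ind (fun a => ⟨a, rfl⟩) c)
  have hcard := Nat.card_eq_of_bijective f hbij
  rw [Finite.card_option] at hcard
  have e1 : nComp (insert s(u,v) A) = Nat.card G'.ConnectedComponent := by
    unfold nComp; rw [hcoe]
  have e2 : nComp A = Nat.card G.ConnectedComponent := rfl
  omega

end Aux2
section Aux3
variable {V : Type} [Fintype V] [DecidableEq V]

lemma reach_of_subset {S T : Finset (Sym2 V)} (h : S ⊆ T) {a b : V}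
    (hr : (SimpleGraph.fromEdgeSet (↑S : Set (Sym2 V))).Reachable a b) :
    (SimpleGraph.fromEdgeSet (↑T : Set (Sym2 V))).Reachable a b :=
  hr.mono (SimpleGraph.fromEdgeSet_mono (Finset.coe_subset.2 h))

lemma nComp_eq_one {F : Finset (Sym2 V)} (h : Conn F) : nComp F = 1 := by
  unfold nComp
  rw [Nat.card_eq_one_iff_unique]
  constructor
  · constructor
    intro c d
    refine SimpleGraph.ConnectedComponent.ind₂ (fun a b => ?_) c d
    exact SimpleGraph.ConnectedComponent.sound (h.preconnected a b)
  · have : Nonempty V := h.nonempty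
    exact ⟨(SimpleGraph.fromEdgeSet (↑F : Set (Sym2 V))).connectedComponentMk
      (Classical.arbitrary V)⟩

lemma conn_mono {S F : Finset (Sym2 V)} (hSF : S ⊆ F) (h : Conn S) : Conn F :=
  h.mono (SimpleGraph.fromEdgeSet_mono (Finset.coe_subset.2 hSF))

lemma nComp_union (A K : Finset (Sym2 V)) :
    (∀ e ∈ K, ∀ a b : V, e = s(a,b) →
      ¬ (SimpleGraph.fromEdgeSet (↑(A ∪ K.erase e) : Set (Sym2 V))).Reachable a b) →
    nComp (A ∪ K) + K.card = nComp A := by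
  classical
  induction K using Finset.induction_on with
  | empty => intro _; simp
  | @insert e K' he ih =>
    intro h
    obtain ⟨a, b, rfl⟩ : ∃ a b : V, e = s(a,b) := Sym2.ind (fun x y => ⟨x, y, rfl⟩) e
    have hins := h _ (Finset.mem_insert_self _ K') a b rfl
    rw [Finset.erase_insert he] at hins
    have hkey := nComp_insert (A ∪ K') hins
    have hih : nComp (A ∪ K') + K'.card = nComp A := by
      refine ih ?_
      intro f hf a' b' hfe hr
      exact h f (Finset.mem_insert_of_mem hf) a' b' hfe
        (reach_of_subset (Finset.union_subset_union_right
          (Finset.erase_subset_erase f (Finset.subset_insert _ K'))) hr)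
    rw [Finset.union_insert, Finset.card_insert_of_notMem he]
    omega

end Aux3
section Aux4
variable {V : Type} [Fintype V] [DecidableEq V]

lemma exchange {E H : Finset (Sym2 V)} {α : Sym2 V → ℝ}
    (hH : IsMinCSG E α H) {a b : V} (he : s(a,b) ∈ H) (hpos : 0 < α s(a,b)) :
    ¬ (SimpleGraph.fromEdgeSet
        (↑(H.erase s(a,b) ∪ E.filter (fun f => α f < α s(a,b))) : Set (Sym2 V))).Reachable a b := by
  classical
  intro hreach
  have hconnH : (SimpleGraph.fromEdgeSet (↑H : Set (Sym2 V))).Connected := hH.1.2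
  set G0 := SimpleGraph.fromEdgeSet (↑(H.erase s(a,b)) : Set (Sym2 V)) with hG0
  -- Step 1 : a and b are not connected in H minus the edge
  have hstep1 : ¬ G0.Reachable a b := by
    intro hr
    have hCSG : IsCSG E (H.erase s(a,b)) := by
      refine ⟨(Finset.erase_subset _ _).trans hH.1.1, ?_⟩
      haveI : Nonempty V := hconnH.nonempty
      refine ⟨fun w z => ?_⟩
      have hwz := hconnH.preconnected w z
      refine reach_rec (fun w z => G0.Reachable w z) (fun _ => .refl _)
        (fun _ _ _ h1 h2 => h1.trans h2) ?_ hwz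
      intro x y hxy hne
      by_cases hxe : s(x,y) = s(a,b)
      · rw [Sym2.eq_iff] at hxe
        rcases hxe with ⟨rfl, rfl⟩ | ⟨rfl, rfl⟩
        · exact hr
        · exact hr.symm
      · exact ((SimpleGraph.fromEdgeSet_adj _).2
          ⟨Finset.mem_coe.2 (Finset.mem_erase.2 ⟨hxe, Finset.mem_coe.1 hxy⟩), hne⟩).reachable
    have hwt := hH.2 _ hCSG
    have hsum : wt α (H.erase s(a,b)) = wt α H - α s(a,b) := Finset.sum_erase_eq_sub he
    linarith
  -- every vertex is G0-connected to a or to b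
  have hcov : ∀ w, G0.Reachable w a ∨ G0.Reachable w b := by
    intro w
    have hwa := hconnH.preconnected w a
    have hiff : (G0.Reachable w a ∨ G0.Reachable w b) ↔
        (G0.Reachable a a ∨ G0.Reachable a b) := by
      refine reach_rec (fun x y => (G0.Reachable x a ∨ G0.Reachable x b) ↔
        (G0.Reachable y a ∨ G0.Reachable y b)) (fun _ => Iff.rfl)
        (fun _ _ _ h1 h2 => h1.trans h2) ?_ hwa
      intro x y hxy hne
      by_cases hxe : s(x,y) = s(a,b)
      · rw [Sym2.eq_iff] at hxe
        rcases hxe with ⟨rfl, rfl⟩ | ⟨rfl, rfl⟩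
        · exact iff_of_true (Or.inl (.refl _)) (Or.inr (.refl _))
        · exact iff_of_true (Or.inr (.refl _)) (Or.inl (.refl _))
      · have hadj : G0.Adj x y := (SimpleGraph.fromEdgeSet_adj _).2
          ⟨Finset.mem_coe.2 (Finset.mem_erase.2 ⟨hxe, Finset.mem_coe.1 hxy⟩), hne⟩
        constructor
        · rintro (h | h)
          · exact Or.inl (hadj.symm.reachable.trans h)
          · exact Or.inr (hadj.symm.reachable.trans h)
        · rintro (h | h)
          · exact Or.inl (hadj.reachable.trans h)
          · exact Or.inr (hadj.reachable.trans h)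
    rcases hiff.2 (Or.inl (.refl a)) with h | h
    · exact Or.inl h
    · exact Or.inr h
  -- lift the assumed reachability
  set P : Prop := ∃ x y : V, s(x,y) ∈ E.filter (fun f => α f < α s(a,b)) ∧
      G0.Reachable x a ∧ G0.Reachable y b with hP
  have hmain : G0.Reachable a b ∨ (P ∧ ((G0.Reachable a a ∧ G0.Reachable b b) ∨
      (G0.Reachable a b ∧ G0.Reachable b a))) := by
    refine reach_rec (fun w z => G0.Reachable w z ∨ (P ∧ ((G0.Reachable w a ∧ G0.Reachable z b) ∨
      (G0.Reachable w b ∧ G0.Reachable z a)))) (fun _ => Or.inl (.refl _)) ?_ ?_ hreach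
    · rintro w z c (h1 | ⟨hPw, (⟨h1, h2⟩ | ⟨h1, h2⟩)⟩) (h3 | ⟨hPz, (⟨h3, h4⟩ | ⟨h3, h4⟩)⟩)
      · exact Or.inl (h1.trans h3)
      · exact Or.inr ⟨hPz, Or.inl ⟨h1.trans h3, h4⟩⟩
      · exact Or.inr ⟨hPz, Or.inr ⟨h1.trans h3, h4⟩⟩
      · exact Or.inr ⟨hPw, Or.inl ⟨h1, h3.symm.trans h2⟩⟩
      · exact absurd (h3.symm.trans h2) hstep1
      · exact Or.inl (h1.trans h4.symm)
      · exact Or.inr ⟨hPw, Or.inr ⟨h1, h3.symm.trans h2⟩⟩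
      · exact Or.inl (h1.trans h4.symm)
      · exact absurd (h2.symm.trans h3) hstep1
    · intro x y hmem hne
      rw [Finset.coe_union, Set.mem_union] at hmem
      rcases hmem with hmem | hmem
      · exact Or.inl ((SimpleGraph.fromEdgeSet_adj _).2 ⟨hmem, hne⟩).reachable
      · rcases hcov x with hx | hx <;> rcases hcov y with hy | hy
        · exact Or.inl (hx.trans hy.symm)
        · exact Or.inr ⟨⟨x, y, Finset.mem_coe.1 hmem, hx, hy⟩, Or.inl ⟨hx, hy⟩⟩
        · refine Or.inr ⟨⟨y, x, ?_, hy, hx⟩, Or.inr ⟨hx, hy⟩⟩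
          have hsw : s(y,x) = s(x,y) := Sym2.eq_swap
          rw [hsw]; exact Finset.mem_coe.1 hmem
        · exact Or.inl (hx.trans hy.symm)
  have hPholds : P := by
    rcases hmain with h | ⟨h, _⟩
    · exact absurd h hstep1
    · exact h
  obtain ⟨x, y, hf, hxa, hyb⟩ := hPholds
  have hxyne : x ≠ y := by rintro rfl; exact hstep1 (hxa.symm.trans hyb)
  have hfnot : s(x,y) ∉ H.erase s(a,b) := by
    intro hm
    have hadj : G0.Adj x y := (SimpleGraph.fromEdgeSet_adj _).2 ⟨Finset.mem_coe.2 hm, hxyne⟩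
    exact hstep1 (hxa.symm.trans (hadj.reachable.trans hyb))
  have hfE : s(x,y) ∈ E := (Finset.mem_filter.1 hf).1
  have hflt : α s(x,y) < α s(a,b) := (Finset.mem_filter.1 hf).2
  set H' := insert s(x,y) (H.erase s(a,b)) with hH'
  have hCSG' : IsCSG E H' := by
    refine ⟨Finset.insert_subset hfE ((Finset.erase_subset _ _).trans hH.1.1), ?_⟩
    have hmono : ∀ {p q : V}, G0.Reachable p q →
        (SimpleGraph.fromEdgeSet (↑H' : Set (Sym2 V))).Reachable p q :=
      fun h => reach_of_subset (Finset.subset_insert _ _) h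
    have hady : (SimpleGraph.fromEdgeSet (↑H' : Set (Sym2 V))).Adj x y :=
      (SimpleGraph.fromEdgeSet_adj _).2
        ⟨Finset.mem_coe.2 (Finset.mem_insert_self _ _), hxyne⟩
    have hto_a : ∀ w, (SimpleGraph.fromEdgeSet (↑H' : Set (Sym2 V))).Reachable w a := by
      intro w
      rcases hcov w with h | h
      · exact hmono h
      · exact ((hmono h).trans (hmono hyb.symm)).trans
          (hady.symm.reachable.trans (hmono hxa))
    haveI : Nonempty V := hconnH.nonempty
    exact ⟨fun w z => (hto_a w).trans (hto_a z).symm⟩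
  have hwt := hH.2 _ hCSG'
  have hsum1 : wt α H' = α s(x,y) + wt α (H.erase s(a,b)) := Finset.sum_insert hfnot
  have hsum2 : wt α (H.erase s(a,b)) = wt α H - α s(a,b) := Finset.sum_erase_eq_sub he
  linarith

end Aux4
section Aux5
variable {V : Type} [Fintype V] [DecidableEq V]

lemma count_cut {E H : Finset (Sym2 V)} {α : Sym2 V → ℝ}
    (hH : IsMinCSG E α H) (U : Finset (Sym2 V))
    (hposU : ∀ e ∈ H ∩ U, 0 < α e)
    (hltU : ∀ e ∈ H ∩ U, ∀ f ∈ E \ U, α f < α e) :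
    (H ∩ U).card + 1 = nComp (E \ U) := by
  classical
  have hcond : ∀ e ∈ H ∩ U, ∀ a b : V, e = s(a,b) →
      ¬ (SimpleGraph.fromEdgeSet
        (↑((E \ U) ∪ (H ∩ U).erase e) : Set (Sym2 V))).Reachable a b := by
    intro e hmem a b hfe hr
    subst hfe
    have hpos := hposU _ hmem
    have heH : s(a,b) ∈ H := (Finset.mem_inter.1 hmem).1
    refine exchange hH heH hpos (reach_of_subset ?_ hr)
    intro f hfm
    rcases Finset.mem_union.1 hfm with hfm | hfm
    · exact Finset.mem_union_right _
        (Finset.mem_filter.2 ⟨(Finset.mem_sdiff.1 hfm).1, hltU _ hmem _ hfm⟩)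
    · exact Finset.mem_union_left _
        ((Finset.erase_subset_erase _ Finset.inter_subset_left) hfm)
  have hmain := nComp_union (E \ U) (H ∩ U) hcond
  have hsub : H ⊆ (E \ U) ∪ (H ∩ U) := by
    intro h hh
    by_cases hU : h ∈ U
    · exact Finset.mem_union_right _ (Finset.mem_inter.2 ⟨hh, hU⟩)
    · exact Finset.mem_union_left _ (Finset.mem_sdiff.2 ⟨hH.1.1 hh, hU⟩)
  have hone : nComp ((E \ U) ∪ (H ∩ U)) = 1 := nComp_eq_one (conn_mono hsub hH.1.2)
  omega

end Aux5

theorem stmt_6 {V : Type} [Fintype V] [DecidableEq V] (E : Finset (Sym2 V))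
    (hconn : Conn E) (α : Sym2 V → ℝ) (hα : IsDist E α)
    {m : ℕ} (x : Fin m → ℝ) (Ecl : Fin m → Finset (Sym2 V))
    (hcl : IsWeightClasses E α x Ecl)
    (H : Finset (Sym2 V)) (hH : IsMinCSG E α H) :
    ∀ ℓ : Fin m, 0 < x ℓ →
      (H ∩ Ecl ℓ).card + nComp (E \ upToLT Ecl ℓ) = nComp (E \ upToLE Ecl ℓ) := by
  classical
  intro ℓ hℓ
  have hEcl := hcl.2.2.1
  have hstrict := hcl.1
  have hLE : ∀ e, e ∈ upToLE Ecl ℓ ↔ ∃ j, j ≤ ℓ ∧ e ∈ Ecl j := by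
    intro e
    unfold upToLE
    rw [Finset.mem_biUnion]
    constructor
    · rintro ⟨j, hj, hje⟩
      exact ⟨j, (Finset.mem_filter.1 hj).2, hje⟩
    · rintro ⟨j, hj, hje⟩
      exact ⟨j, Finset.mem_filter.2 ⟨Finset.mem_univ _, hj⟩, hje⟩
  have hLT : ∀ e, e ∈ upToLT Ecl ℓ ↔ ∃ j, j < ℓ ∧ e ∈ Ecl j := by
    intro e
    unfold upToLT
    rw [Finset.mem_biUnion]
    constructor
    · rintro ⟨j, hj, hje⟩
      exact ⟨j, (Finset.mem_filter.1 hj).2, hje⟩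
    · rintro ⟨j, hj, hje⟩
      exact ⟨j, Finset.mem_filter.2 ⟨Finset.mem_univ _, hj⟩, hje⟩
  have c1 : (H ∩ upToLE Ecl ℓ).card + 1 = nComp (E \ upToLE Ecl ℓ) := by
    refine count_cut hH _ ?_ ?_
    · intro e hmem
      obtain ⟨j, hj, hje⟩ := (hLE e).1 (Finset.mem_inter.1 hmem).2
      rw [((hEcl j e).1 hje).2]
      exact lt_of_lt_of_le hℓ (hstrict.antitone hj)
    · intro e hmem f hf
      obtain ⟨j, hj, hje⟩ := (hLE e).1 (Finset.mem_inter.1 hmem).2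
      have hae : α e = x j := ((hEcl j e).1 hje).2
      have hfE : f ∈ E := (Finset.mem_sdiff.1 hf).1
      obtain ⟨i, hi⟩ := hcl.2.2.2 f hfE
      have hiℓ : ℓ < i := by
        by_contra hc
        push_neg at hc
        exact (Finset.mem_sdiff.1 hf).2 ((hLE f).2 ⟨i, hc, (hEcl i f).2 ⟨hfE, hi⟩⟩)
      rw [hi, hae]
      exact lt_of_lt_of_le (hstrict hiℓ) (hstrict.antitone hj)
  have c2 : (H ∩ upToLT Ecl ℓ).card + 1 = nComp (E \ upToLT Ecl ℓ) := by
    refine count_cut hH _ ?_ ?_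
    · intro e hmem
      obtain ⟨j, hj, hje⟩ := (hLT e).1 (Finset.mem_inter.1 hmem).2
      rw [((hEcl j e).1 hje).2]
      exact lt_of_lt_of_le hℓ (hstrict.antitone hj.le)
    · intro e hmem f hf
      obtain ⟨j, hj, hje⟩ := (hLT e).1 (Finset.mem_inter.1 hmem).2
      have hae : α e = x j := ((hEcl j e).1 hje).2
      have hfE : f ∈ E := (Finset.mem_sdiff.1 hf).1
      obtain ⟨i, hi⟩ := hcl.2.2.2 f hfE
      have hiℓ : ℓ ≤ i := by
        by_contra hc
        push_neg at hc
        exact (Finset.mem_sdiff.1 hf).2 ((hLT f).2 ⟨i, hc, (hEcl i f).2 ⟨hfE, hi⟩⟩)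
      rw [hi, hae]
      exact lt_of_le_of_lt (hstrict.antitone hiℓ) (hstrict hj)
  have hsplit : upToLE Ecl ℓ = upToLT Ecl ℓ ∪ Ecl ℓ := by
    ext e
    rw [Finset.mem_union, hLE e, hLT e]
    constructor
    · rintro ⟨j, hj, hje⟩
      rcases lt_or_eq_of_le hj with h | h
      · exact Or.inl ⟨j, h, hje⟩
      · subst h; exact Or.inr hje
    · rintro (⟨j, hj, hje⟩ | hje)
      · exact ⟨j, hj.le, hje⟩
      · exact ⟨ℓ, le_refl _, hje⟩
  have hdisj : Disjoint (H ∩ upToLT Ecl ℓ) (H ∩ Ecl ℓ) := by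
    rw [Finset.disjoint_left]
    intro e h1 h2
    obtain ⟨j, hj, hje⟩ := (hLT e).1 (Finset.mem_inter.1 h1).2
    have h1' : α e = x j := ((hEcl j e).1 hje).2
    have h2' : α e = x ℓ := ((hEcl ℓ e).1 (Finset.mem_inter.1 h2).2).2
    exact absurd (hstrict.injective (h1'.symm.trans h2')) hj.ne
  have hcard : (H ∩ upToLE Ecl ℓ).card = (H ∩ upToLT Ecl ℓ).card + (H ∩ Ecl ℓ).card := by
    rw [hsplit, Finset.inter_union_distrib_left]
    exact Finset.card_union_of_disjoint hdisj
  omega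
end

section
/- Let G=(V,E) be a finite connected graph with opt = max_{E'⊆E} CR(E'), and let α be a probability distribution on E. If H is a minimum-weight connected spanning subgraph of (G,α), then α(H) ≤ opt. -/
open Finset

section Aux
variable {V : Type} [Fintype V] [DecidableEq V]
open SimpleGraph


lemma card_aux {A B : Type} [Finite A] (f : A → B) (hf : Function.Surjective f)
    (a₁ a₂ : A) (hne : a₁ ≠ a₂) (heq : f a₁ = f a₂) : Nat.card B + 1 ≤ Nat.card A := by
  classical
  haveI := Fintype.ofFinite A
  haveI : Finite B := Finite.of_surjective f hf
  haveI := Fintype.ofFinite B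
  rw [Nat.card_eq_fintype_card, Nat.card_eq_fintype_card]
  have hs : Function.Surjective (fun a : {a : A // ¬ (a = a₁)} => f a.1) := by
    intro b
    obtain ⟨a, ha⟩ := hf b
    by_cases h : a = a₁
    · refine ⟨⟨a₂, fun h' => hne h'.symm⟩, ?_⟩
      show f a₂ = b
      rw [h] at ha
      rw [heq] at ha
      exact ha
    · exact ⟨⟨a, h⟩, ha⟩
  have h1 : Fintype.card B ≤ Fintype.card {a : A // ¬ (a = a₁)} :=
    Fintype.card_le_of_surjective _ hs
  have h2 : Fintype.card {a : A // ¬ (a = a₁)} = Fintype.card A - Fintype.card {a : A // a = a₁} :=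
    Fintype.card_subtype_compl _
  have h3 : Fintype.card {a : A // a = a₁} = 1 := Fintype.card_subtype_eq a₁
  have h4 : 1 ≤ Fintype.card A := Fintype.card_pos_iff.mpr ⟨a₁⟩
  omega


lemma nComp_conn {S : Finset (Sym2 V)} (h : Conn S) : nComp S = 1 := by
  rw [nComp, Nat.card_eq_one_iff_unique]
  refine ⟨⟨fun c d => ?_⟩, ⟨SimpleGraph.connectedComponentMk _ h.nonempty.some⟩⟩
  refine ConnectedComponent.ind₂ (fun v w => ?_) c d
  exact ConnectedComponent.sound (h.preconnected v w)

lemma nComp_erase {S : Finset (Sym2 V)} {u v : V} (he : s(u,v) ∈ S)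
    (hnr : ¬ (SimpleGraph.fromEdgeSet (↑(S.erase s(u,v)) : Set (Sym2 V))).Reachable u v) :
    nComp S + 1 ≤ nComp (S.erase s(u,v)) := by
  set G := SimpleGraph.fromEdgeSet (↑S : Set (Sym2 V))
  set G' := SimpleGraph.fromEdgeSet (↑(S.erase s(u,v)) : Set (Sym2 V))
  have hle : G' ≤ G := fromEdgeSet_mono (by exact_mod_cast Finset.coe_subset.mpr (Finset.erase_subset _ _))
  have huv : u ≠ v := fun h => hnr (h ▸ Reachable.refl u)
  let φ : G'.ConnectedComponent → G.ConnectedComponent :=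
    ConnectedComponent.map (SimpleGraph.Hom.ofLE hle)
  have hsurj : Function.Surjective φ := by
    refine ConnectedComponent.ind (fun w => ?_)
    exact ⟨G'.connectedComponentMk w, rfl⟩
  have hadj : G.Adj u v := (fromEdgeSet_adj _).mpr ⟨Finset.mem_coe.mpr he, huv⟩
  refine card_aux φ hsurj (G'.connectedComponentMk u) (G'.connectedComponentMk v) ?_ ?_
  · intro h; exact hnr (ConnectedComponent.exact h)
  · exact ConnectedComponent.sound hadj.reachable

lemma nComp_sdiff {B : Finset (Sym2 V)} (K : Finset (Sym2 V)) (hK : K ⊆ B)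
    (hbr : ∀ e ∈ K, ∀ u v : V, e = s(u,v) →
      ¬ (SimpleGraph.fromEdgeSet (↑(B.erase e) : Set (Sym2 V))).Reachable u v) :
    nComp B + K.card ≤ nComp (B \ K) := by
  classical
  induction K using Finset.induction_on with
  | empty => simp
  | @insert f K' hf ih =>
    have hfB : f ∈ B := hK (Finset.mem_insert_self _ _)
    have hK' : K' ⊆ B := fun x hx => hK (Finset.mem_insert_of_mem hx)
    have ih' := ih hK' (fun e he u v huv => hbr e (Finset.mem_insert_of_mem he) u v huv)
    have hstep : nComp (B \ K') + 1 ≤ nComp ((B \ K').erase f) := by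
      induction f using Sym2.ind with
      | _ u v =>
        refine nComp_erase (Finset.mem_sdiff.mpr ⟨hfB, hf⟩) ?_
        intro hr
        refine hbr _ (Finset.mem_insert_self _ _) u v rfl ?_
        exact hr.mono (fromEdgeSet_mono (Finset.coe_subset.mpr
          (Finset.erase_subset_erase _ Finset.sdiff_subset)))
    have heq : B \ insert f K' = (B \ K').erase f := by
      ext x
      simp [Finset.mem_sdiff, Finset.mem_erase, Finset.mem_insert]
      tauto
    rw [heq, Finset.card_insert_of_notMem hf]
    omega

lemma reach_split {H : Finset (Sym2 V)} (u v : V) {a b : V}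
    (p : (SimpleGraph.fromEdgeSet (↑H : Set (Sym2 V))).Walk a b) :
    (SimpleGraph.fromEdgeSet (↑(H.erase s(u,v)) : Set (Sym2 V))).Reachable a b ∨
    ((SimpleGraph.fromEdgeSet (↑(H.erase s(u,v)) : Set (Sym2 V))).Reachable a u ∧
      (SimpleGraph.fromEdgeSet (↑(H.erase s(u,v)) : Set (Sym2 V))).Reachable b v) ∨
    ((SimpleGraph.fromEdgeSet (↑(H.erase s(u,v)) : Set (Sym2 V))).Reachable a v ∧
      (SimpleGraph.fromEdgeSet (↑(H.erase s(u,v)) : Set (Sym2 V))).Reachable b u) := by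
  classical
  set G₀ := SimpleGraph.fromEdgeSet (↑(H.erase s(u,v)) : Set (Sym2 V)) with hG₀
  induction p with
  | nil => exact Or.inl (Reachable.refl _)
  | @cons a c b h p ih =>
    have hadj := (SimpleGraph.fromEdgeSet_adj _).mp h
    by_cases hac : s(a, c) = s(u, v)
    · rcases Sym2.eq_iff.mp hac with ⟨hau, hcv⟩ | ⟨hav, hcu⟩
      · subst hau; subst hcv
        rcases ih with h1 | ⟨h1, h2⟩ | ⟨h1, h2⟩
        · exact Or.inr (Or.inl ⟨Reachable.refl _, h1.symm⟩)
        · exact Or.inr (Or.inl ⟨Reachable.refl _, h2⟩)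
        · exact Or.inl h2.symm
      · subst hav; subst hcu
        rcases ih with h1 | ⟨h1, h2⟩ | ⟨h1, h2⟩
        · exact Or.inr (Or.inr ⟨Reachable.refl _, h1.symm⟩)
        · exact Or.inl h2.symm
        · exact Or.inr (Or.inr ⟨Reachable.refl _, h2⟩)
    · have hadj0 : G₀.Adj a c := by
        refine (SimpleGraph.fromEdgeSet_adj _).mpr ⟨?_, hadj.2⟩
        exact Finset.mem_coe.mpr (Finset.mem_erase.mpr ⟨hac, Finset.mem_coe.mp hadj.1⟩)
      rcases ih with h1 | ⟨h1, h2⟩ | ⟨h1, h2⟩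
      · exact Or.inl (hadj0.reachable.trans h1)
      · exact Or.inr (Or.inl ⟨hadj0.reachable.trans h1, h2⟩)
      · exact Or.inr (Or.inr ⟨hadj0.reachable.trans h1, h2⟩)

lemma key_disc {E H : Finset (Sym2 V)} {α : Sym2 V → ℝ} (hα : IsDist E α)
    (hH : IsMinCSG E α H) {t : ℝ} (ht : 0 ≤ t) {u v : V} (huv : s(u,v) ∈ H)
    (hheavy : t < α s(u,v)) :
    ¬ (SimpleGraph.fromEdgeSet
        (↑((E.filter (fun e => α e ≤ t) ∪ H).erase s(u,v)) : Set (Sym2 V))).Reachable u v := by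
  classical
  intro hr
  set G₀ := SimpleGraph.fromEdgeSet (↑(H.erase s(u,v)) : Set (Sym2 V)) with hG₀
  have hHE : H ⊆ E := hH.1.1
  have hconnH : (SimpleGraph.fromEdgeSet (↑H : Set (Sym2 V))).Connected := hH.1.2
  haveI hneV : Nonempty V := hconnH.nonempty
  have hsplit : ∀ w : V, G₀.Reachable w u ∨ G₀.Reachable w v := by
    intro w
    obtain ⟨p⟩ := hconnH.preconnected w u
    rcases reach_split u v p with h | ⟨h1, h2⟩ | ⟨h1, h2⟩
    · exact Or.inl h
    · exact Or.inl h1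
    · exact Or.inr h1
  by_cases hvu : G₀.Reachable u v
  · have hconn' : G₀.Connected := by
      refine ⟨fun a b => ?_⟩
      have key : ∀ w, G₀.Reachable w u := by
        intro w
        rcases hsplit w with h | h
        · exact h
        · exact h.trans hvu.symm
      exact (key a).trans (key b).symm
    have hless := hH.2 _ ⟨(Finset.erase_subset _ _).trans hHE, hconn'⟩
    have hsum : wt α (H.erase s(u,v)) + α s(u,v) = wt α H :=
      Finset.sum_erase_add _ _ huv
    simp only [wt] at hless hsum
    have := lt_of_le_of_lt ht hheavy
    linarith
  · set S : Set V := {w | G₀.Reachable u w} with hS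
    have huS : u ∈ S := Reachable.refl u
    have hvS : v ∉ S := fun h => hvu h
    obtain ⟨p⟩ := hr
    obtain ⟨d, _, hdS, hdS'⟩ := p.exists_boundary_dart S huS hvS
    have hadj := d.adj
    have hxy := (SimpleGraph.fromEdgeSet_adj _).mp hadj
    have hne : s(d.fst, d.snd) ≠ s(u,v) :=
      (Finset.mem_erase.mp (Finset.mem_coe.mp hxy.1)).1
    have hfH : s(d.fst, d.snd) ∉ H := by
      intro hmem
      have hadj0 : G₀.Adj d.fst d.snd :=
        (SimpleGraph.fromEdgeSet_adj _).mpr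
          ⟨Finset.mem_coe.mpr (Finset.mem_erase.mpr ⟨hne, hmem⟩), hxy.2⟩
      exact hdS' (hdS.trans hadj0.reachable)
    have hfE : s(d.fst, d.snd) ∈ E.filter (fun e => α e ≤ t) := by
      rcases Finset.mem_union.mp (Finset.mem_erase.mp (Finset.mem_coe.mp hxy.1)).2 with h | h
      · exact h
      · exact absurd h hfH
    have hflight : α s(d.fst, d.snd) ≤ t := (Finset.mem_filter.mp hfE).2
    have hfEmem : s(d.fst, d.snd) ∈ E := (Finset.mem_filter.mp hfE).1
    set H' := insert s(d.fst, d.snd) (H.erase s(u,v)) with hH'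
    have hH'sub : H' ⊆ E :=
      Finset.insert_subset hfEmem ((Finset.erase_subset _ _).trans hHE)
    have hle : G₀ ≤ SimpleGraph.fromEdgeSet (↑H' : Set (Sym2 V)) :=
      SimpleGraph.fromEdgeSet_mono (Finset.coe_subset.mpr (Finset.subset_insert _ _))
    have hyv : G₀.Reachable d.snd v := by
      rcases hsplit d.snd with h | h
      · exact absurd h.symm hdS'
      · exact h
    have hadj' : (SimpleGraph.fromEdgeSet (↑H' : Set (Sym2 V))).Adj d.fst d.snd :=
      (SimpleGraph.fromEdgeSet_adj _).mpr
        ⟨Finset.mem_coe.mpr (Finset.mem_insert_self _ _), hxy.2⟩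
    have huvH' : (SimpleGraph.fromEdgeSet (↑H' : Set (Sym2 V))).Reachable u v :=
      ((hdS : G₀.Reachable u d.fst).mono hle).trans
        (hadj'.reachable.trans (hyv.mono hle))
    have hconn' : (SimpleGraph.fromEdgeSet (↑H' : Set (Sym2 V))).Connected := by
      refine ⟨fun a b => ?_⟩
      have key : ∀ w, (SimpleGraph.fromEdgeSet (↑H' : Set (Sym2 V))).Reachable w u := by
        intro w
        rcases hsplit w with h | h
        · exact h.mono hle
        · exact (h.mono hle).trans huvH'.symm
      exact (key a).trans (key b).symm
    have hless := hH.2 H' ⟨hH'sub, hconn'⟩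
    have hsum1 : wt α (H.erase s(u,v)) + α s(u,v) = wt α H :=
      Finset.sum_erase_add _ _ huv
    have hsum2 : wt α H' = α s(d.fst, d.snd) + wt α (H.erase s(u,v)) := by
      rw [wt, hH', Finset.sum_insert (fun hmem => hfH (Finset.mem_of_mem_erase hmem))]
      rfl
    rw [hsum2] at hless
    linarith

lemma cutRate_le_opt {E E' : Finset (Sym2 V)} (h : E' ⊆ E) : cutRate E E' ≤ opt E :=
  Finset.le_sup' _ (Finset.mem_powerset.mpr h)

lemma opt_nonneg (E : Finset (Sym2 V)) : 0 ≤ opt E := by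
  have h0 : cutRate E (∅ : Finset (Sym2 V)) = 0 := by
    rw [cutRate, if_neg]
    rintro ⟨-, h⟩
    exact Finset.not_nonempty_empty h
  rw [← h0]
  exact cutRate_le_opt (Finset.empty_subset E)

lemma threshold {E H : Finset (Sym2 V)} {α : Sym2 V → ℝ} (hα : IsDist E α)
    (hH : IsMinCSG E α H) (hconn : Conn E) (hV : 1 < Fintype.card V) {t : ℝ} (ht : 0 ≤ t) :
    ((H.filter (fun e => t < α e)).card : ℝ) ≤ opt E * ((E.filter (fun e => t < α e)).card) := by
  classical
  have hHE : H ⊆ E := hH.1.1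
  by_cases hne : (E.filter (fun e => t < α e)).Nonempty
  swap
  · rw [Finset.not_nonempty_iff_eq_empty] at hne
    have hsubf : H.filter (fun e => t < α e) ⊆ E.filter (fun e => t < α e) :=
      Finset.filter_subset_filter _ hHE
    rw [hne] at hsubf ⊢
    rw [Finset.subset_empty.mp hsubf]
    simp
  · have hKB : H.filter (fun e => t < α e) ⊆ E.filter (fun e => α e ≤ t) ∪ H :=
      fun e he => Finset.mem_union_right _ (Finset.filter_subset _ _ he)
    have hBconn : Conn (E.filter (fun e => α e ≤ t) ∪ H) := by
      refine hH.1.2.mono (SimpleGraph.fromEdgeSet_mono ?_)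
      exact Finset.coe_subset.mpr Finset.subset_union_right
    have h1 : nComp (E.filter (fun e => α e ≤ t) ∪ H) = 1 := nComp_conn hBconn
    have hbr : ∀ e ∈ H.filter (fun e => t < α e), ∀ u v : V, e = s(u,v) →
        ¬ (SimpleGraph.fromEdgeSet
          (↑((E.filter (fun e => α e ≤ t) ∪ H).erase e) : Set (Sym2 V))).Reachable u v := by
      intro e he u v huv
      subst huv
      have h' := Finset.mem_filter.mp he
      exact key_disc hα hH ht h'.1 h'.2
    have h2 := nComp_sdiff (B := E.filter (fun e => α e ≤ t) ∪ H) _ hKB hbr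
    have hBK : (E.filter (fun e => α e ≤ t) ∪ H) \ H.filter (fun e => t < α e)
        = E.filter (fun e => α e ≤ t) := by
      ext e
      simp only [Finset.mem_sdiff, Finset.mem_union, Finset.mem_filter]
      constructor
      · rintro ⟨h1 | h1, h2⟩
        · exact h1
        · exact ⟨hHE h1, not_lt.mp fun hlt => h2 ⟨h1, hlt⟩⟩
      · intro h1
        exact ⟨Or.inl h1, fun hc => absurd h1.2 (not_le.mpr hc.2)⟩
    have h3 : E.filter (fun e => α e ≤ t) = E \ E.filter (fun e => t < α e) := by
      ext e
      simp only [Finset.mem_sdiff, Finset.mem_filter]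
      constructor
      · intro h1
        exact ⟨h1.1, fun hc => absurd h1.2 (not_le.mpr hc.2)⟩
      · rintro ⟨h1, h2⟩
        exact ⟨h1, not_lt.mp fun hlt => h2 ⟨h1, hlt⟩⟩
    have h4 := cutRate_le_opt (Finset.filter_subset (fun e => t < α e) E)
    rw [cutRate, if_pos ⟨hV, hne⟩] at h4
    have hcard : (0:ℝ) < ((E.filter (fun e => t < α e)).card : ℝ) := by
      exact_mod_cast Finset.card_pos.mpr hne
    rw [div_le_iff₀ hcard] at h4
    have h5 : nComp E = 1 := nComp_conn hconn
    rw [h1, hBK, h3] at h2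
    have h6 : ((H.filter (fun e => t < α e)).card : ℝ) + 1
        ≤ (nComp (E \ E.filter (fun e => t < α e)) : ℝ) := by
      exact_mod_cast by omega
    rw [h5] at h4
    push_cast at h4
    linarith

lemma layer_cake (T E : Finset (Sym2 V)) (c : ℝ) (hc : 0 ≤ c) :
    ∀ (n : ℕ) (f : Sym2 V → ℝ), (((T ∪ E).image f).filter (fun x => 0 < x)).card = n →
    (∀ e, 0 ≤ f e) →
    (∀ t : ℝ, 0 ≤ t → ((T.filter (fun e => t < f e)).card : ℝ)
      ≤ c * ((E.filter (fun e => t < f e)).card)) →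
    ∑ e ∈ T, f e ≤ c * ∑ e ∈ E, f e := by
  classical
  intro n
  induction n using Nat.strong_induction_on with
  | _ n ih =>
    intro f hn hf h
    by_cases hpos : (((T ∪ E).image f).filter (fun x => 0 < x)).Nonempty
    · set N := ((T ∪ E).image f).filter (fun x => 0 < x) with hN
      set m := N.min' hpos with hm
      have hm_mem : m ∈ N := N.min'_mem hpos
      have hm_pos : 0 < m := (Finset.mem_filter.mp hm_mem).2
      have hmin : ∀ e ∈ T ∪ E, 0 < f e → m ≤ f e := fun e he hfe =>
        N.min'_le _ (Finset.mem_filter.mpr ⟨Finset.mem_image_of_mem f he, hfe⟩)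
      set f' := fun e => if m ≤ f e then f e - m else f e with hf'
      have hf'0 : ∀ e, 0 ≤ f' e := by
        intro e
        by_cases h0 : m ≤ f e <;> simp only [f', h0, if_true, if_false] <;>
          [linarith; exact hf e]
      have hval : ∀ e ∈ T ∪ E, f e = 0 ∨ m ≤ f e := by
        intro e he
        rcases eq_or_lt_of_le (hf e) with h0 | h0
        · exact Or.inl h0.symm
        · exact Or.inr (hmin e he h0)
      have hf'val : ∀ e ∈ T ∪ E, (f e = 0 ∧ f' e = 0) ∨ (m ≤ f e ∧ f' e = f e - m) := by
        intro e he
        rcases hval e he with h0 | h0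
        · exact Or.inl ⟨h0, by simp only [f', h0]; rw [if_neg (by linarith)]⟩
        · exact Or.inr ⟨h0, by simp only [f']; rw [if_pos h0]⟩
      have hfilt : ∀ (S : Finset (Sym2 V)), S ⊆ T ∪ E → ∀ t : ℝ, 0 ≤ t →
          S.filter (fun e => t < f' e) = S.filter (fun e => t + m < f e) := by
        intro S hS t htt
        apply Finset.filter_congr
        intro e he
        rcases hf'val e (hS he) with ⟨h0, h1⟩ | ⟨h0, h1⟩ <;> rw [h1] <;>
          constructor <;> intro hx <;> linarith
      have hsubN : ((T ∪ E).image f').filter (fun x => 0 < x)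
          ⊆ (N.erase m).image (fun x => x - m) := by
        intro x hx
        obtain ⟨hx1, hx2⟩ := Finset.mem_filter.mp hx
        obtain ⟨e, he, hfe⟩ := Finset.mem_image.mp hx1
        rcases hf'val e he with ⟨h0, h1⟩ | ⟨h0, h1⟩
        · rw [← hfe, h1] at hx2; linarith
        · refine Finset.mem_image.mpr ⟨f e, Finset.mem_erase.mpr ⟨?_, ?_⟩, ?_⟩
          · intro heq
            rw [← hfe, h1, heq] at hx2
            linarith
          · exact Finset.mem_filter.mpr ⟨Finset.mem_image_of_mem f he,
              lt_of_lt_of_le hm_pos h0⟩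
          · rw [← hfe, h1]
      have hN' : (((T ∪ E).image f').filter (fun x => 0 < x)).card < n := by
        have hc1 := Finset.card_le_card hsubN
        have hc2 := Finset.card_image_le (s := N.erase m) (f := fun x => x - m)
        have hc3 : (N.erase m).card = N.card - 1 := Finset.card_erase_of_mem hm_mem
        have hc4 : 0 < N.card := Finset.card_pos.mpr hpos
        omega
      have hind := ih _ hN' f' rfl hf'0 ?_
      · have hdec : ∀ (S : Finset (Sym2 V)), S ⊆ T ∪ E →
            ∑ e ∈ S, f e = (∑ e ∈ S, f' e)
              + m * ((S.filter (fun e => (0:ℝ) < f e)).card : ℝ) := by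
          intro S hS
          have hstep : ∑ e ∈ S, f e = ∑ e ∈ S, (f' e + if 0 < f e then m else 0) := by
            apply Finset.sum_congr rfl
            intro e he
            rcases hf'val e (hS he) with ⟨h0, h1⟩ | ⟨h0, h1⟩
            · rw [h1, h0, if_neg (lt_irrefl 0)]; ring
            · rw [h1, if_pos (lt_of_lt_of_le hm_pos h0)]; ring
          have hite : ∑ e ∈ S, (if 0 < f e then m else 0)
              = m * ((S.filter (fun e => (0:ℝ) < f e)).card : ℝ) := by
            rw [Finset.sum_ite, Finset.sum_const, Finset.sum_const_zero, add_zero,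
              nsmul_eq_mul, mul_comm]
          rw [hstep, Finset.sum_add_distrib, hite]
        have h0 := h 0 le_rfl
        have hdT := hdec T Finset.subset_union_left
        have hdE := hdec E Finset.subset_union_right
        have hmul : m * ((T.filter (fun e => (0:ℝ) < f e)).card : ℝ)
            ≤ m * (c * ((E.filter (fun e => (0:ℝ) < f e)).card : ℝ)) :=
          mul_le_mul_of_nonneg_left h0 (le_of_lt hm_pos)
        rw [hdT, hdE]
        calc (∑ e ∈ T, f' e) + m * ((T.filter (fun e => (0:ℝ) < f e)).card : ℝ)
            ≤ c * (∑ e ∈ E, f' e) + m * (c * ((E.filter (fun e => (0:ℝ) < f e)).card : ℝ)) := by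
              exact add_le_add hind hmul
          _ = c * ((∑ e ∈ E, f' e) + m * ((E.filter (fun e => (0:ℝ) < f e)).card : ℝ)) := by ring
      · intro t htt
        rw [hfilt T Finset.subset_union_left t htt, hfilt E Finset.subset_union_right t htt]
        exact h (t + m) (by linarith)
    · have hT0 : ∀ e ∈ T, f e = 0 := by
        intro e he
        refine le_antisymm (not_lt.mp fun h0 => hpos ⟨f e, ?_⟩) (hf e)
        exact Finset.mem_filter.mpr ⟨Finset.mem_image_of_mem f (Finset.mem_union_left _ he), h0⟩
      rw [Finset.sum_congr rfl hT0, Finset.sum_const_zero]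
      exact mul_nonneg hc (Finset.sum_nonneg fun e _ => hf e)

end Aux

theorem stmt_8 {V : Type} [Fintype V] [DecidableEq V] (E : Finset (Sym2 V))
    (hconn : Conn E) (α : Sym2 V → ℝ) (hα : IsDist E α)
    (H : Finset (Sym2 V)) (hH : IsMinCSG E α H) :
    wt α H ≤ opt E := by
  classical
  by_cases hV : 1 < Fintype.card V
  · have hkey := layer_cake H E (opt E) (opt_nonneg E) _ α rfl hα.1
      (fun t ht => threshold hα hH hconn hV ht)
    rw [wt]
    calc ∑ e ∈ H, α e ≤ opt E * ∑ e ∈ E, α e := hkey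
      _ = opt E := by rw [hα.2.2, mul_one]
  · haveI hne : Nonempty V := hconn.nonempty
    haveI hsub : Subsingleton V := by
      refine Fintype.card_le_one_iff_subsingleton.mp ?_
      omega
    have hconn0 : Conn (∅ : Finset (Sym2 V)) := by
      refine ⟨fun a b => ?_⟩
      rw [Subsingleton.elim a b]
    have hle := hH.2 ∅ ⟨Finset.empty_subset E, hconn0⟩
    simp only [wt, Finset.sum_empty] at hle
    rw [wt]
    exact le_trans hle (opt_nonneg E)
end

section
/- Let G=(V,E) be a finite connected graph and opt = max_{E'⊆E} CR(E'). If E* ⊆ E achieves CR(E*) = opt and α is the uniform distribution on E* (α(e)=1/|E*| for e∈E*, 0 otherwise), then every connected spanning subgraph S satisfies α(S) ≥ opt. Hence the wiretapper can secure probability opt. -/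
open Finset

open SimpleGraph in
lemma reach_sup_edge {V : Type} {G : SimpleGraph V} {u v x y : V}
    (h : (G ⊔ SimpleGraph.edge u v).Reachable x y) :
    G.Reachable x y ∨ (G.Reachable x u ∧ G.Reachable v y) ∨
      (G.Reachable x v ∧ G.Reachable u y) := by
  obtain ⟨w⟩ := h
  induction w with
  | nil => exact Or.inl (Reachable.refl _)
  | @cons a b c hadj p ih =>
    cases hadj with
    | inl hG =>
      rcases ih with h1 | ⟨h1, h2⟩ | ⟨h1, h2⟩
      · exact Or.inl (hG.reachable.trans h1)
      · exact Or.inr (Or.inl ⟨hG.reachable.trans h1, h2⟩)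
      · exact Or.inr (Or.inr ⟨hG.reachable.trans h1, h2⟩)
    | inr he =>
      rw [SimpleGraph.edge_adj] at he
      rcases he.1 with ⟨rfl, rfl⟩ | ⟨rfl, rfl⟩
      · rcases ih with h1 | ⟨h1, h2⟩ | ⟨h1, h2⟩
        · exact Or.inr (Or.inl ⟨Reachable.refl _, h1⟩)
        · exact Or.inr (Or.inl ⟨Reachable.refl _, h2⟩)
        · exact Or.inl h2
      · rcases ih with h1 | ⟨h1, h2⟩ | ⟨h1, h2⟩
        · exact Or.inr (Or.inr ⟨Reachable.refl _, h1⟩)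
        · exact Or.inl h2
        · exact Or.inr (Or.inr ⟨Reachable.refl _, h2⟩)

open SimpleGraph in
lemma card_cc_antitone {V : Type} [Finite V] {G H : SimpleGraph V} (h : G ≤ H) :
    Nat.card H.ConnectedComponent ≤ Nat.card G.ConnectedComponent := by
  apply Nat.card_le_card_of_surjective
    (ConnectedComponent.map (Hom.ofLE h))
  intro c
  obtain ⟨x, rfl⟩ := c.exists_rep
  exact ⟨G.connectedComponentMk x, rfl⟩

open SimpleGraph in
lemma card_cc_sup_edge {V : Type} [Finite V] (G : SimpleGraph V) (u v : V) :
    Nat.card G.ConnectedComponent ≤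
      Nat.card (G ⊔ SimpleGraph.edge u v).ConnectedComponent + 1 := by
  classical
  set H := G ⊔ SimpleGraph.edge u v with hH
  have key : ∀ c : G.ConnectedComponent,
      ∀ d : G.ConnectedComponent,
      c.map (Hom.ofLE (le_sup_left : G ≤ H)) =
        d.map (Hom.ofLE le_sup_left) →
      c ≠ G.connectedComponentMk u → d ≠ G.connectedComponentMk u → c = d := by
    refine ConnectedComponent.ind₂ ?_
    intro x y hmap hx hy
    simp only [ConnectedComponent.map_mk] at hmap
    have hreach : H.Reachable x y := ConnectedComponent.exact hmap
    rcases reach_sup_edge hreach with h1 | ⟨h1, h2⟩ | ⟨h1, h2⟩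
    · exact ConnectedComponent.sound h1
    · exact absurd (ConnectedComponent.sound h1) hx
    · exact absurd (ConnectedComponent.sound h2.symm) hy
  let f : G.ConnectedComponent → H.ConnectedComponent ⊕ Unit := fun c =>
    if c = G.connectedComponentMk u then Sum.inr ()
    else Sum.inl (c.map (Hom.ofLE le_sup_left))
  have hinj : Function.Injective f := by
    intro c d hcd
    by_cases hc : c = G.connectedComponentMk u <;>
      by_cases hd : d = G.connectedComponentMk u
    · exact hc.trans hd.symm
    · simp [f, hc, hd] at hcd
    · simp [f, hc, hd] at hcd
    · simp only [f, if_neg hc, if_neg hd, Sum.inl.injEq] at hcd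
      exact key c d hcd hc hd
  calc Nat.card G.ConnectedComponent ≤ Nat.card (H.ConnectedComponent ⊕ Unit) :=
        Nat.card_le_card_of_injective f hinj
    _ = Nat.card H.ConnectedComponent + 1 := by
        rw [Nat.card_sum]; simp

lemma nComp_erase_s11 {V : Type} [Fintype V] [DecidableEq V] (B : Finset (Sym2 V))
    (e : Sym2 V) : nComp (B.erase e) ≤ nComp B + 1 := by
  induction e with
  | _ u v =>
    have h1 : SimpleGraph.fromEdgeSet (↑B : Set (Sym2 V)) ≤
        SimpleGraph.fromEdgeSet (↑(B.erase s(u, v)) : Set (Sym2 V)) ⊔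
          SimpleGraph.edge u v := by
      rw [SimpleGraph.edge, ← SimpleGraph.fromEdgeSet_union]
      apply SimpleGraph.fromEdgeSet_mono
      intro x hx
      by_cases hxe : x = s(u, v)
      · exact Set.mem_union_right _ (by simp [hxe])
      · refine Set.mem_union_left _ ?_
        simp only [Finset.coe_erase, Set.mem_diff, Set.mem_singleton_iff]
        exact ⟨by simpa using hx, hxe⟩
    calc nComp (B.erase s(u, v)) ≤
        Nat.card (SimpleGraph.fromEdgeSet (↑(B.erase s(u, v)) : Set (Sym2 V)) ⊔
          SimpleGraph.edge u v).ConnectedComponent + 1 :=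
          card_cc_sup_edge _ u v
      _ ≤ nComp B + 1 := by
          exact Nat.add_le_add_right (card_cc_antitone h1) 1

lemma nComp_sdiff_s11 {V : Type} [Fintype V] [DecidableEq V] (A F : Finset (Sym2 V)) :
    nComp (A \ F) ≤ nComp A + F.card := by
  classical
  induction F using Finset.induction_on with
  | empty => simp
  | @insert a F ha ih =>
    rw [Finset.sdiff_insert, Finset.card_insert_of_notMem ha]
    calc nComp ((A \ F).erase a) ≤ nComp (A \ F) + 1 := nComp_erase_s11 _ _
      _ ≤ nComp A + F.card + 1 := Nat.add_le_add_right ih 1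
      _ = nComp A + (F.card + 1) := by ring

lemma nComp_mono_s11 {V : Type} [Fintype V] [DecidableEq V] {A B : Finset (Sym2 V)}
    (h : A ⊆ B) : nComp B ≤ nComp A :=
  card_cc_antitone (SimpleGraph.fromEdgeSet_mono (by exact_mod_cast h))


lemma nComp_of_conn {V : Type} [Fintype V] [DecidableEq V] {S : Finset (Sym2 V)}
    (h : Conn S) : nComp S = 1 := by
  have h1 := h.preconnected.subsingleton_connectedComponent
  have h2 : Nonempty (SimpleGraph.fromEdgeSet (↑S : Set (Sym2 V))).ConnectedComponent :=
    ⟨SimpleGraph.connectedComponentMk _ h.nonempty.some⟩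
  exact Nat.card_unique

theorem stmt_11 {V : Type} [Fintype V] [DecidableEq V] (E Estar : Finset (Sym2 V))
    (hconn : Conn E) (hsub : Estar ⊆ E) (hopt : cutRate E Estar = opt E)
    (α : Sym2 V → ℝ)
    (hα : ∀ e, α e = if e ∈ Estar then ((Estar.card : ℝ))⁻¹ else 0) :
    ∀ S, IsCSG E S → opt E ≤ wt α S := by
  classical
  intro S hS
  have hα0 : ∀ e, 0 ≤ α e := by
    intro e; rw [hα]; split
    · positivity
    · exact le_refl 0
  have hwt0 : 0 ≤ wt α S := Finset.sum_nonneg fun e _ => hα0 e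
  rw [← hopt]
  unfold cutRate
  split
  case isFalse => exact hwt0
  case isTrue h =>
    have hEcard : (0:ℝ) < Estar.card := by
      exact_mod_cast Finset.card_pos.mpr h.2
    have hwt : wt α S = ((S ∩ Estar).card : ℝ) / Estar.card := by
      unfold wt
      simp_rw [hα]
      rw [Finset.sum_ite_mem, Finset.sum_const, nsmul_eq_mul, div_eq_mul_inv]
    rw [hwt, div_le_div_iff_of_pos_right hEcard]
    have h1 : nComp (E \ Estar) ≤ nComp (S \ Estar) :=
      nComp_mono_s11 (Finset.sdiff_subset_sdiff hS.1 (le_refl _))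
    have h2 : nComp (S \ Estar) ≤ nComp S + (S ∩ Estar).card := by
      rw [← Finset.sdiff_inter_self_left]
      exact nComp_sdiff_s11 S (S ∩ Estar)
    have h3 : nComp S = 1 := nComp_of_conn hS.2
    have h4 : nComp E = 1 := nComp_of_conn hconn
    have h5 : nComp (E \ Estar) ≤ 1 + (S ∩ Estar).card := by omega
    have h6 : ((nComp (E \ Estar) : ℝ)) ≤ 1 + ((S ∩ Estar).card : ℝ) := by
      exact_mod_cast h5
    rw [h4]
    push_cast
    linarith
end
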